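/- arXiv:2404.07913 — 7 statements merged into one kernel-verified Lean document; each statement's English description precedes it below -/
import Mathlib

section
/- For any T > 0 and ε > 0, the attainable set satisfies 𝒜_{T+ε} = 𝒜_T + e^{-TA} 𝒜_ε (Minkowski sum), and consequently 𝒜_T is contained in the interior of 𝒜_{T+ε}. -/
open MeasureTheory Set Filter Matrix Pointwise

/-- Matrix exponential. -/
noncomputable def mexp {n : ℕ} (M : Matrix (Fin n) (Fin n) ℝ) : Matrix (Fin n) (Fin n) ℝ :=
  NormedSpace.exp M

/-- Euclidean norm on `ℝ^m`. -/
noncomputable def eNorm {m : ℕ} (v : Fin m → ℝ) : ℝ := Real.sqrt (∑ i, v i ^ 2)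

/-- Admissible controls: measurable, with values in the closed Euclidean unit ball. -/
def Admissible {m : ℕ} (u : ℝ → Fin m → ℝ) : Prop :=
  Measurable u ∧ ∀ t, eNorm (u t) ≤ 1

/-- Kalman rank condition. -/
def Kalman {n m : ℕ} (A : Matrix (Fin n) (Fin n) ℝ) (B : Matrix (Fin n) (Fin m) ℝ) : Prop :=
  Submodule.span ℝ {x : Fin n → ℝ | ∃ i < n, ∃ v : Fin m → ℝ, x = (A ^ i) *ᵥ (B *ᵥ v)} = ⊤

/-- The attainable set `𝒜_T`. -/
noncomputable def attain {n m : ℕ} (A : Matrix (Fin n) (Fin n) ℝ)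
    (B : Matrix (Fin n) (Fin m) ℝ) (T : ℝ) : Set (Fin n → ℝ) :=
  {x | ∃ u : ℝ → Fin m → ℝ, Admissible u ∧
    x = ∫ t in Ioc (0:ℝ) T, mexp (-(t • A)) *ᵥ (B *ᵥ u t)}

/-- `u` steers `x₀` to the origin in time `T`. -/
noncomputable def Steers {n m : ℕ} (A : Matrix (Fin n) (Fin n) ℝ)
    (B : Matrix (Fin n) (Fin m) ℝ) (x₀ : Fin n → ℝ) (T : ℝ) (u : ℝ → Fin m → ℝ) : Prop :=
  x₀ + ∫ t in Ioc (0:ℝ) T, mexp (-(t • A)) *ᵥ (B *ᵥ u t) = 0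

/-- The `L¹` cost of a control on `[0,T]`. -/
noncomputable def costJ {m : ℕ} (T : ℝ) (u : ℝ → Fin m → ℝ) : ℝ :=
  ∫ t in Ioc (0:ℝ) T, eNorm (u t)

/-- Finite-horizon optimal cost `μ_T(x₀)`. -/
noncomputable def muT {n m : ℕ} (A : Matrix (Fin n) (Fin n) ℝ)
    (B : Matrix (Fin n) (Fin m) ℝ) (T : ℝ) (x₀ : Fin n → ℝ) : ℝ :=
  sInf {c | ∃ u : ℝ → Fin m → ℝ, Admissible u ∧ Steers A B x₀ T u ∧ c = costJ T u}

/-- Trajectory of the system from `x₀` with control `u`. -/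
noncomputable def traj {n m : ℕ} (A : Matrix (Fin n) (Fin n) ℝ)
    (B : Matrix (Fin n) (Fin m) ℝ) (x₀ : Fin n → ℝ) (u : ℝ → Fin m → ℝ) (t : ℝ) :
    Fin n → ℝ :=
  mexp (t • A) *ᵥ (x₀ + ∫ τ in Ioc (0:ℝ) t, mexp (-(τ • A)) *ᵥ (B *ᵥ u τ))

/-- Infinite-horizon optimal cost `μ_∞(x₀)`. -/
noncomputable def muInf {n m : ℕ} (A : Matrix (Fin n) (Fin n) ℝ)
    (B : Matrix (Fin n) (Fin m) ℝ) (x₀ : Fin n → ℝ) : ℝ :=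
  sInf {c | ∃ u : ℝ → Fin m → ℝ, Admissible u ∧
    IntegrableOn (fun t => eNorm (u t)) (Ioi (0:ℝ)) ∧
    Tendsto (traj A B x₀ u) atTop (nhds 0) ∧
    c = ∫ t in Ioi (0:ℝ), eNorm (u t)}

open NormedSpace Topology

attribute [local instance] Matrix.linftyOpNormedAddCommGroup Matrix.linftyOpNormedRing Matrix.linftyOpNormedAlgebra

lemma eNorm_eq_norm {m : ℕ} (v : Fin m → ℝ) :
    eNorm v = ‖(WithLp.equiv 2 (Fin m → ℝ)).symm v‖ := by
  rw [EuclideanSpace.norm_eq]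
  simp [eNorm, sq_abs]

lemma eNorm_nonneg {m : ℕ} (v : Fin m → ℝ) : 0 ≤ eNorm v := Real.sqrt_nonneg _

lemma eNorm_zero {m : ℕ} : eNorm (0 : Fin m → ℝ) = 0 := by simp [eNorm]

lemma norm_le_eNorm {m : ℕ} (v : Fin m → ℝ) : ‖v‖ ≤ eNorm v := by
  rw [pi_norm_le_iff_of_nonneg (eNorm_nonneg v)]
  intro i
  rw [Real.norm_eq_abs, ← Real.sqrt_sq_eq_abs]
  exact Real.sqrt_le_sqrt (Finset.single_le_sum (fun j _ => sq_nonneg (v j)) (Finset.mem_univ i))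

lemma eNorm_smul {m : ℕ} (c : ℝ) (v : Fin m → ℝ) : eNorm (c • v) = |c| * eNorm v := by
  rw [eNorm_eq_norm, eNorm_eq_norm, ← Real.norm_eq_abs, ← norm_smul]
  congr 1

lemma eNorm_add_le {m : ℕ} (v w : Fin m → ℝ) : eNorm (v + w) ≤ eNorm v + eNorm w := by
  rw [eNorm_eq_norm, eNorm_eq_norm, eNorm_eq_norm]
  exact norm_add_le _ _

lemma eNorm_neg {m : ℕ} (v : Fin m → ℝ) : eNorm (-v) = eNorm v := by
  simp [eNorm_eq_norm]

lemma eNorm_eq_zero {m : ℕ} {v : Fin m → ℝ} (h : eNorm v = 0) : v = 0 := by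
  rw [eNorm_eq_norm] at h
  have := norm_eq_zero.mp h
  simpa using congrArg (WithLp.equiv 2 (Fin m → ℝ)) this

lemma mexp_cont {n : ℕ} (A : Matrix (Fin n) (Fin n) ℝ) :
    Continuous (fun t : ℝ => mexp (-(t • A))) := by
  exact (NormedSpace.exp_continuous (𝔸 := Matrix (Fin n) (Fin n) ℝ)).comp (by continuity)

lemma mexp_vec_cont {n m : ℕ} (A : Matrix (Fin n) (Fin n) ℝ) (B : Matrix (Fin n) (Fin m) ℝ)
    (v : Fin m → ℝ) : Continuous (fun t : ℝ => mexp (-(t • A)) *ᵥ (B *ᵥ v)) :=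
  (mexp_cont A).matrix_mulVec continuous_const

lemma mexp_hasDerivAt {n : ℕ} (A : Matrix (Fin n) (Fin n) ℝ) (t : ℝ) :
    HasDerivAt (fun s : ℝ => mexp (-(s • A))) (-(A * mexp (-(t • A)))) t := by
  have h := hasDerivAt_exp_smul_const' (𝕂 := ℝ) (-A) t
  have : (fun s : ℝ => mexp (-(s • A))) = fun s : ℝ => exp (s • (-A)) := by
    funext s; simp [mexp, smul_neg]
  rw [this]
  have h2 : (-A) * exp (t • (-A)) = -(A * mexp (-(t • A))) := by
    simp [mexp, smul_neg]
  rw [← h2]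
  exact h

lemma meas_ctrl {n m : ℕ} (A : Matrix (Fin n) (Fin n) ℝ) (B : Matrix (Fin n) (Fin m) ℝ)
    {u : ℝ → Fin m → ℝ} (hu : Measurable u) :
    Measurable (fun t => mexp (-(t • A)) *ᵥ (B *ᵥ u t)) := by
  apply measurable_pi_lambda
  intro i
  have : (fun t => (mexp (-(t • A)) *ᵥ (B *ᵥ u t)) i)
      = fun t => ∑ j, (mexp (-(t • A)) * B) i j * u t j := by
    funext t
    rw [mulVec_mulVec]
    simp [Matrix.mulVec, dotProduct]
  rw [this]
  apply Finset.measurable_sum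
  intro j _
  have hc : Continuous (fun t : ℝ => (mexp (-(t • A)) * B) i j) := by
    have := (mexp_cont A).matrix_mul (continuous_const : Continuous fun _ : ℝ => B)
    exact ((continuous_apply j).comp ((continuous_apply i).comp this))
  exact hc.measurable.mul ((measurable_pi_apply j).comp hu)

lemma integrable_ctrl {n m : ℕ} (A : Matrix (Fin n) (Fin n) ℝ) (B : Matrix (Fin n) (Fin m) ℝ)
    {u : ℝ → Fin m → ℝ} (hu : Measurable u) (hb : ∀ t, eNorm (u t) ≤ 1) (a b : ℝ) :
    IntegrableOn (fun t => mexp (-(t • A)) *ᵥ (B *ᵥ u t)) (Ioc a b) := by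
  have hg : IntegrableOn (fun t : ℝ => ‖mexp (-(t • A))‖ * ‖B‖) (Ioc a b) :=
    (Continuous.mul (mexp_cont A).norm continuous_const).integrableOn_Ioc
  apply Integrable.mono' hg ((meas_ctrl A B hu).aestronglyMeasurable.restrict)
  filter_upwards with t
  calc ‖mexp (-(t • A)) *ᵥ (B *ᵥ u t)‖ ≤ ‖mexp (-(t • A))‖ * ‖B *ᵥ u t‖ :=
        Matrix.linfty_opNorm_mulVec _ _
    _ ≤ ‖mexp (-(t • A))‖ * (‖B‖ * ‖u t‖) :=
        mul_le_mul_of_nonneg_left (Matrix.linfty_opNorm_mulVec _ _) (norm_nonneg _)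
    _ ≤ ‖mexp (-(t • A))‖ * (‖B‖ * 1) :=
        mul_le_mul_of_nonneg_left
          (mul_le_mul_of_nonneg_left ((norm_le_eNorm _).trans (hb t)) (norm_nonneg _))
          (norm_nonneg _)
    _ = ‖mexp (-(t • A))‖ * ‖B‖ := by ring

lemma mexp_add_split {n : ℕ} (A : Matrix (Fin n) (Fin n) ℝ) (T s : ℝ) :
    mexp (-((s + T) • A)) = mexp (-(T • A)) * mexp (-(s • A)) := by
  have hc : Commute (-(T • A)) (-(s • A)) :=
    (((Commute.refl A).smul_left T).smul_right s).neg_left.neg_right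
  have h : -((s + T) • A) = -(T • A) + -(s • A) := by
    rw [add_smul]; abel
  rw [mexp, mexp, mexp, h]
  exact Matrix.exp_add_of_commute _ _ hc

noncomputable def mulVecCLM {n : ℕ} (M : Matrix (Fin n) (Fin n) ℝ) :
    (Fin n → ℝ) →L[ℝ] (Fin n → ℝ) :=
  LinearMap.toContinuousLinearMap (Matrix.mulVecLin M)

lemma key_shift {n m : ℕ} (A : Matrix (Fin n) (Fin n) ℝ) (B : Matrix (Fin n) (Fin m) ℝ)
    {u₂ : ℝ → Fin m → ℝ} (hu₂ : Measurable u₂) (hb₂ : ∀ t, eNorm (u₂ t) ≤ 1) (T ε : ℝ) :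
    ∫ t in Ioc T (T + ε), mexp (-(t • A)) *ᵥ (B *ᵥ u₂ (t - T)) =
      mexp (-(T • A)) *ᵥ ∫ s in Ioc (0:ℝ) ε, mexp (-(s • A)) *ᵥ (B *ᵥ u₂ s) := by
  have hpre : (fun s : ℝ => s + T) ⁻¹' Ioc T (T + ε) = Ioc 0 ε := by
    ext s
    simp only [mem_preimage, mem_Ioc]
    constructor
    · rintro ⟨h1, h2⟩; exact ⟨by linarith, by linarith⟩
    · rintro ⟨h1, h2⟩; exact ⟨by linarith, by linarith⟩
  have hmp := (measurePreserving_add_right (volume : Measure ℝ) T)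
  have heq := hmp.setIntegral_preimage_emb (measurableEmbedding_addRight T)
    (fun t => mexp (-(t • A)) *ᵥ (B *ᵥ u₂ (t - T))) (Ioc T (T + ε))
  rw [← heq, hpre]
  have h2 : ∀ s ∈ Ioc (0:ℝ) ε,
      mexp (-((s + T) • A)) *ᵥ (B *ᵥ u₂ (s + T - T)) =
        mulVecCLM (mexp (-(T • A))) (mexp (-(s • A)) *ᵥ (B *ᵥ u₂ s)) := by
    intro s _
    rw [add_sub_cancel_right, mexp_add_split, ← mulVec_mulVec]
    rfl
  rw [setIntegral_congr_fun measurableSet_Ioc h2,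
    ContinuousLinearMap.integral_comp_comm _ (integrable_ctrl A B hu₂ hb₂ 0 ε)]
  rfl

lemma attain_split {n m : ℕ} (A : Matrix (Fin n) (Fin n) ℝ) (B : Matrix (Fin n) (Fin m) ℝ)
    (T ε : ℝ) (hT : 0 < T) (hε : 0 < ε) :
    attain A B (T + ε) =
      attain A B T + (fun x => mexp (-(T • A)) *ᵥ x) '' attain A B ε := by
  have hun : Ioc (0:ℝ) T ∪ Ioc T (T + ε) = Ioc 0 (T + ε) :=
    Ioc_union_Ioc_eq_Ioc hT.le (by linarith)
  have hdisj : Disjoint (Ioc (0:ℝ) T) (Ioc T (T + ε)) := Ioc_disjoint_Ioc_of_le le_rfl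
  ext x
  constructor
  · rintro ⟨u, ⟨hu, hb⟩, rfl⟩
    have hsplit : (∫ t in Ioc (0:ℝ) (T + ε), mexp (-(t • A)) *ᵥ (B *ᵥ u t)) =
        (∫ t in Ioc (0:ℝ) T, mexp (-(t • A)) *ᵥ (B *ᵥ u t)) +
          ∫ t in Ioc T (T + ε), mexp (-(t • A)) *ᵥ (B *ᵥ u t) := by
      rw [← hun, setIntegral_union hdisj measurableSet_Ioc
        (integrable_ctrl A B hu hb 0 T) (integrable_ctrl A B hu hb T (T + ε))]
    set u₂ : ℝ → Fin m → ℝ := fun s => u (s + T) with hu₂def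
    have hu₂ : Measurable u₂ := hu.comp (measurable_add_const T)
    have hb₂ : ∀ t, eNorm (u₂ t) ≤ 1 := fun t => hb (t + T)
    have hks := key_shift A B hu₂ hb₂ T ε
    have hcg : (∫ t in Ioc T (T + ε), mexp (-(t • A)) *ᵥ (B *ᵥ u₂ (t - T))) =
        ∫ t in Ioc T (T + ε), mexp (-(t • A)) *ᵥ (B *ᵥ u t) := by
      apply setIntegral_congr_fun measurableSet_Ioc
      intro t _
      simp [hu₂def, sub_add_cancel]
    rw [hsplit]
    rw [Set.mem_add]
    refine ⟨_, ⟨u, ⟨hu, hb⟩, rfl⟩,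
      _, ⟨_, ⟨u₂, ⟨hu₂, hb₂⟩, rfl⟩, rfl⟩, ?_⟩
    dsimp only
    rw [← hks, hcg]
  · rintro ⟨x₁, ⟨u₁, ⟨hu₁, hb₁⟩, rfl⟩, -, ⟨y, ⟨u₂, ⟨hu₂, hb₂⟩, rfl⟩, rfl⟩, rfl⟩
    set u : ℝ → Fin m → ℝ := fun t => if t ≤ T then u₁ t else u₂ (t - T) with hudef
    have hu : Measurable u :=
      Measurable.ite measurableSet_Iic hu₁ (hu₂.comp (measurable_sub_const T))
    have hb : ∀ t, eNorm (u t) ≤ 1 := by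
      intro t
      by_cases h : t ≤ T <;> simp [hudef, h, hb₁ t, hb₂ (t - T)]
    refine ⟨u, ⟨hu, hb⟩, ?_⟩
    dsimp only
    have hsplit : (∫ t in Ioc (0:ℝ) (T + ε), mexp (-(t • A)) *ᵥ (B *ᵥ u t)) =
        (∫ t in Ioc (0:ℝ) T, mexp (-(t • A)) *ᵥ (B *ᵥ u t)) +
          ∫ t in Ioc T (T + ε), mexp (-(t • A)) *ᵥ (B *ᵥ u t) := by
      rw [← hun, setIntegral_union hdisj measurableSet_Ioc
        (integrable_ctrl A B hu hb 0 T) (integrable_ctrl A B hu hb T (T + ε))]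
    rw [hsplit]
    congr 1
    · apply setIntegral_congr_fun measurableSet_Ioc
      intro t ht
      simp [hudef, ht.2]
    · rw [← key_shift A B hu₂ hb₂ T ε]
      apply setIntegral_congr_fun measurableSet_Ioc
      intro t ht
      have : ¬ (t ≤ T) := not_le.mpr ht.1
      simp [hudef, this]

lemma deriv_mem {n : ℕ} {S : Submodule ℝ (Fin n → ℝ)} {f : ℝ → Fin n → ℝ}
    {d : Fin n → ℝ} {t ε : ℝ} (htε : t < ε) (hd : HasDerivAt f d t)
    (hdiff : ∀ s ∈ Ioo t ε, f s - f t ∈ S) : d ∈ S := by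
  have h1 : Tendsto (slope f t) (𝓝[>] t) (𝓝 d) :=
    (hasDerivAt_iff_tendsto_slope.mp hd).mono_left
      (nhdsWithin_mono t (fun x hx => ne_of_gt hx))
  have h2 : ∀ᶠ s in 𝓝[>] t, slope f t s ∈ (S : Set (Fin n → ℝ)) := by
    filter_upwards [Ioo_mem_nhdsGT htε] with s hs
    rw [slope_def_module]
    exact S.smul_mem _ (hdiff s hs)
  exact (S.closed_of_finiteDimensional).mem_of_tendsto h1 h2

lemma seg_mem {n m : ℕ} (A : Matrix (Fin n) (Fin n) ℝ) (B : Matrix (Fin n) (Fin m) ℝ)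
    {ε a b : ℝ} (ha : 0 ≤ a) (hb : b ≤ ε) {v : Fin m → ℝ} (hv : eNorm v ≤ 1) :
    (∫ t in Ioc a b, mexp (-(t • A)) *ᵥ (B *ᵥ v)) ∈ attain A B ε := by
  refine ⟨(Ioc a b).indicator (fun _ => v), ⟨?_, ?_⟩, ?_⟩
  · exact measurable_const.indicator measurableSet_Ioc
  · intro t
    by_cases h : t ∈ Ioc a b
    · simpa [indicator_of_mem h] using hv
    · simp [indicator_of_notMem h, eNorm_zero]
  · have hc : ∀ t ∈ Ioc (0:ℝ) ε,
        mexp (-(t • A)) *ᵥ (B *ᵥ (Ioc a b).indicator (fun _ => v) t) =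
          (Ioc a b).indicator (fun t => mexp (-(t • A)) *ᵥ (B *ᵥ v)) t := by
      intro t _
      by_cases h : t ∈ Ioc a b
      · simp [indicator_of_mem h]
      · simp [indicator_of_notMem h]
    rw [setIntegral_congr_fun measurableSet_Ioc hc,
      setIntegral_indicator measurableSet_Ioc,
      inter_eq_self_of_subset_right (Ioc_subset_Ioc ha hb)]

lemma mexp_zero {n : ℕ} (A : Matrix (Fin n) (Fin n) ℝ) : mexp (-((0:ℝ) • A)) = 1 := by
  simp only [zero_smul, neg_zero, mexp]
  exact NormedSpace.exp_zero

noncomputable def mulVecRightCLM {n' m' : ℕ} (w : Fin m' → ℝ) :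
    Matrix (Fin n') (Fin m') ℝ →L[ℝ] (Fin n' → ℝ) :=
  LinearMap.toContinuousLinearMap
    { toFun := fun M => M *ᵥ w
      map_add' := fun M N => Matrix.add_mulVec M N w
      map_smul' := fun c M => by simp [Matrix.smul_mulVec] }

lemma hasDerivAt_mexp_mulVec {n : ℕ} (A : Matrix (Fin n) (Fin n) ℝ) (w : Fin n → ℝ) (t : ℝ) :
    HasDerivAt (fun s : ℝ => mexp (-(s • A)) *ᵥ w)
      (-(A *ᵥ (mexp (-(t • A)) *ᵥ w))) t := by
  have h := (mulVecRightCLM w).hasFDerivAt.comp_hasDerivAt t (mexp_hasDerivAt A t)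
  have he : (mulVecRightCLM w) (-(A * mexp (-(t • A)))) = -(A *ᵥ (mexp (-(t • A)) *ᵥ w)) := by
    show (-(A * mexp (-(t • A)))) *ᵥ w = _
    rw [Matrix.neg_mulVec, mulVec_mulVec]
  replace h := h.congr_deriv he
  exact h

lemma span_attain {n m : ℕ} (A : Matrix (Fin n) (Fin n) ℝ) (B : Matrix (Fin n) (Fin m) ℝ)
    (hK : Kalman A B) {ε : ℝ} (hε : 0 < ε) :
    Submodule.span ℝ (attain A B ε) = ⊤ := by
  set S := Submodule.span ℝ (attain A B ε) with hS
  have step1 : ∀ v : Fin m → ℝ, eNorm v ≤ 1 → ∀ t ∈ Ico (0:ℝ) ε,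
      mexp (-(t • A)) *ᵥ (B *ᵥ v) ∈ S := by
    intro v hv t ht
    have hc : Continuous (fun s : ℝ => mexp (-(s • A)) *ᵥ (B *ᵥ v)) := mexp_vec_cont A B v
    have hG : HasDerivAt (fun t' => ∫ s in (0:ℝ)..t', mexp (-(s • A)) *ᵥ (B *ᵥ v))
        (mexp (-(t • A)) *ᵥ (B *ᵥ v)) t :=
      intervalIntegral.integral_hasDerivAt_right (hc.intervalIntegrable 0 t)
        (hc.stronglyMeasurableAtFilter _ _) hc.continuousAt
    refine deriv_mem ht.2 hG ?_
    intro s hs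
    have h1 : (∫ x in (0:ℝ)..s, mexp (-(x • A)) *ᵥ (B *ᵥ v)) -
        (∫ x in (0:ℝ)..t, mexp (-(x • A)) *ᵥ (B *ᵥ v)) =
        ∫ x in t..s, mexp (-(x • A)) *ᵥ (B *ᵥ v) :=
      intervalIntegral.integral_interval_sub_left (hc.intervalIntegrable 0 s)
        (hc.intervalIntegrable 0 t)
    rw [h1, intervalIntegral.integral_of_le hs.1.le]
    exact Submodule.subset_span (seg_mem A B ht.1 hs.2.le hv)
  have step1' : ∀ v : Fin m → ℝ, ∀ t ∈ Ico (0:ℝ) ε,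
      mexp (-(t • A)) *ᵥ (B *ᵥ v) ∈ S := by
    intro v t ht
    by_cases hv0 : v = 0
    · subst hv0
      simp only [Matrix.mulVec_zero]
      exact S.zero_mem
    · set c := eNorm v with hc
      have hcpos : 0 < c := by
        rcases lt_or_eq_of_le (eNorm_nonneg v) with h | h
        · exact h
        · exact absurd (eNorm_eq_zero h.symm) hv0
      have hv1 : eNorm (c⁻¹ • v) ≤ 1 := by
        rw [eNorm_smul, abs_of_pos (inv_pos.mpr hcpos), ← hc, inv_mul_cancel₀ hcpos.ne']
      have := S.smul_mem c (step1 (c⁻¹ • v) hv1 t ht)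
      rwa [Matrix.mulVec_smul, Matrix.mulVec_smul, smul_smul,
        mul_inv_cancel₀ hcpos.ne', one_smul] at this
  have step2 : ∀ k : ℕ, ∀ v : Fin m → ℝ, ∀ t ∈ Ico (0:ℝ) ε,
      (A ^ k) *ᵥ (mexp (-(t • A)) *ᵥ (B *ᵥ v)) ∈ S := by
    intro k
    induction k with
    | zero => intro v t ht; simpa [Matrix.one_mulVec] using step1' v t ht
    | succ k ih =>
      intro v t ht
      have hder := ((mulVecCLM (A ^ k)).hasFDerivAt.comp_hasDerivAt t
        (hasDerivAt_mexp_mulVec A (B *ᵥ v) t))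
      have he : (mulVecCLM (A ^ k)) (-(A *ᵥ (mexp (-(t • A)) *ᵥ (B *ᵥ v)))) =
          -((A ^ (k+1)) *ᵥ (mexp (-(t • A)) *ᵥ (B *ᵥ v))) := by
        show (A ^ k) *ᵥ (-(A *ᵥ _)) = _
        simp only [Matrix.mulVec_neg, mulVec_mulVec, pow_succ, Matrix.mul_assoc]
      rw [he] at hder
      have hmem : -(A ^ (k+1) *ᵥ mexp (-(t • A)) *ᵥ B *ᵥ v) ∈ S := deriv_mem ht.2 hder ?_
      · simpa using S.neg_mem hmem
      · intro s hs
        exact S.sub_mem (ih v s ⟨ht.1.trans hs.1.le, hs.2⟩) (ih v t ht)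
  apply top_unique
  rw [← hK]
  apply Submodule.span_le.mpr
  rintro x ⟨i, -, v, rfl⟩
  have h0 := step2 i v 0 ⟨le_refl 0, hε⟩
  rwa [mexp_zero, Matrix.one_mulVec] at h0

lemma interior_neg' {n : ℕ} (s : Set (Fin n → ℝ)) : interior (-s) = -interior s := by
  rw [show -s = (Homeomorph.neg (Fin n → ℝ)) '' s by simp [Set.image_neg_eq_neg],
    ← (Homeomorph.neg (Fin n → ℝ)).image_interior]
  show (fun x => -x) '' _ = _
  rw [Set.image_neg_eq_neg]

lemma attain_convex {n m : ℕ} (A : Matrix (Fin n) (Fin n) ℝ) (B : Matrix (Fin n) (Fin m) ℝ)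
    (ε : ℝ) : Convex ℝ (attain A B ε) := by
  rintro x ⟨u, ⟨hu, hbu⟩, rfl⟩ y ⟨w, ⟨hw, hbw⟩, rfl⟩ a b ha hb hab
  refine ⟨fun t => a • u t + b • w t, ⟨?_, ?_⟩, ?_⟩
  · exact (hu.const_smul a).add (hw.const_smul b)
  · intro t
    calc eNorm (a • u t + b • w t) ≤ eNorm (a • u t) + eNorm (b • w t) := eNorm_add_le _ _
      _ = |a| * eNorm (u t) + |b| * eNorm (w t) := by rw [eNorm_smul, eNorm_smul]
      _ ≤ a * 1 + b * 1 := by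
          rw [abs_of_nonneg ha, abs_of_nonneg hb]
          exact add_le_add (mul_le_mul_of_nonneg_left (hbu t) ha)
            (mul_le_mul_of_nonneg_left (hbw t) hb)
      _ = 1 := by rw [mul_one, mul_one, hab]
  · have h : ∀ t ∈ Ioc (0:ℝ) ε, mexp (-(t • A)) *ᵥ (B *ᵥ (a • u t + b • w t)) =
        a • (mexp (-(t • A)) *ᵥ (B *ᵥ u t)) + b • (mexp (-(t • A)) *ᵥ (B *ᵥ w t)) := by
      intro t _
      rw [Matrix.mulVec_add, Matrix.mulVec_smul, Matrix.mulVec_smul, Matrix.mulVec_add,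
        Matrix.mulVec_smul, Matrix.mulVec_smul]
    have hi1 : IntegrableOn (fun t => a • (mexp (-(t • A)) *ᵥ (B *ᵥ u t))) (Ioc (0:ℝ) ε) :=
      (integrable_ctrl A B hu hbu 0 ε).smul a
    have hi2 : IntegrableOn (fun t => b • (mexp (-(t • A)) *ᵥ (B *ᵥ w t))) (Ioc (0:ℝ) ε) :=
      (integrable_ctrl A B hw hbw 0 ε).smul b
    rw [setIntegral_congr_fun measurableSet_Ioc h, integral_add hi1 hi2,
      integral_smul, integral_smul]

lemma attain_neg_mem {n m : ℕ} {A : Matrix (Fin n) (Fin n) ℝ} {B : Matrix (Fin n) (Fin m) ℝ}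
    {ε : ℝ} {x : Fin n → ℝ} (hx : x ∈ attain A B ε) : -x ∈ attain A B ε := by
  obtain ⟨u, ⟨hu, hb⟩, rfl⟩ := hx
  refine ⟨fun t => -u t, ⟨hu.neg, fun t => by simpa [eNorm_neg] using hb t⟩, ?_⟩
  have h : ∀ t ∈ Ioc (0:ℝ) ε, mexp (-(t • A)) *ᵥ (B *ᵥ (-u t)) =
      -(mexp (-(t • A)) *ᵥ (B *ᵥ u t)) := by
    intro t _
    rw [Matrix.mulVec_neg, Matrix.mulVec_neg]
  rw [setIntegral_congr_fun measurableSet_Ioc h, integral_neg]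

lemma zero_mem_attain {n m : ℕ} (A : Matrix (Fin n) (Fin n) ℝ) (B : Matrix (Fin n) (Fin m) ℝ)
    (ε : ℝ) : (0 : Fin n → ℝ) ∈ attain A B ε := by
  refine ⟨fun _ => 0, ⟨measurable_const, fun t => by simp [eNorm_zero]⟩, ?_⟩
  simp [Matrix.mulVec_zero]

lemma zero_mem_interior_attain {n m : ℕ} (A : Matrix (Fin n) (Fin n) ℝ)
    (B : Matrix (Fin n) (Fin m) ℝ) (hK : Kalman A B) {ε : ℝ} (hε : 0 < ε) :
    (0 : Fin n → ℝ) ∈ interior (attain A B ε) := by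
  have hconv := attain_convex A B ε
  have h0 := zero_mem_attain A B ε
  have hspan := span_attain A B hK hε
  have hvs : vectorSpan ℝ (attain A B ε) = ⊤ := by
    apply top_unique
    rw [← hspan]
    apply Submodule.span_le.mpr
    intro x hx
    rw [vectorSpan_def]
    exact Submodule.subset_span ⟨x, hx, 0, h0, by simp [vsub_eq_sub]⟩
  have haff : affineSpan ℝ (attain A B ε) = ⊤ :=
    (AffineSubspace.affineSpan_eq_top_iff_vectorSpan_eq_top_of_nonempty ℝ (Fin n → ℝ) (Fin n → ℝ) ⟨0, h0⟩).mpr hvs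
  obtain ⟨z, hz⟩ := hconv.interior_nonempty_iff_affineSpan_eq_top.mpr haff
  have hzneg : -z ∈ interior (attain A B ε) := by
    have hsymm : -(attain A B ε) = attain A B ε := by
      ext y
      constructor
      · intro hy
        simpa using attain_neg_mem (Set.mem_neg.mp hy)
      · intro hy
        exact Set.mem_neg.mpr (attain_neg_mem hy)
    have h1 : -z ∈ -(interior (attain A B ε)) := Set.neg_mem_neg.mpr hz
    rwa [← interior_neg', hsymm] at h1
  have hint : Convex ℝ (interior (attain A B ε)) := hconv.interior
  have := hint hz hzneg (by norm_num : (0:ℝ) ≤ 1/2) (by norm_num : (0:ℝ) ≤ 1/2) (by norm_num)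
  simpa using this

theorem stmt3 {n m : ℕ} (A : Matrix (Fin n) (Fin n) ℝ) (B : Matrix (Fin n) (Fin m) ℝ)
    (hK : Kalman A B) (T ε : ℝ) (hT : 0 < T) (hε : 0 < ε) :
    attain A B (T + ε) =
      attain A B T + (fun x => mexp (-(T • A)) *ᵥ x) '' attain A B ε ∧
    attain A B T ⊆ interior (attain A B (T + ε)) := by
  have hsplit := attain_split A B T ε hT hε
  refine ⟨hsplit, ?_⟩
  intro x hx
  have h1 : mexp (-(T • A)) * mexp (T • A) = 1 := by
    have h := mexp_add_split A T (-T)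
    rw [show (-T + T : ℝ) = 0 by ring] at h
    rw [mexp_zero] at h
    rw [show -((-T : ℝ) • A) = T • A by rw [neg_smul, neg_neg]] at h
    exact h.symm
  have h2 : mexp (T • A) * mexp (-(T • A)) = 1 := by
    have h := mexp_add_split A (-T) T
    rw [show (T + -T : ℝ) = 0 by ring] at h
    rw [mexp_zero] at h
    rw [show -((-T : ℝ) • A) = T • A by rw [neg_smul, neg_neg]] at h
    exact h.symm
  let F : (Fin n → ℝ) ≃ₜ (Fin n → ℝ) :=
    { toFun := fun z => mexp (-(T • A)) *ᵥ z
      invFun := fun z => mexp (T • A) *ᵥ z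
      left_inv := fun z => by
        show mexp (T • A) *ᵥ (mexp (-(T • A)) *ᵥ z) = z
        rw [mulVec_mulVec, h2, Matrix.one_mulVec]
      right_inv := fun z => by
        show mexp (-(T • A)) *ᵥ (mexp (T • A) *ᵥ z) = z
        rw [mulVec_mulVec, h1, Matrix.one_mulVec]
      continuous_toFun := continuous_const.matrix_mulVec continuous_id
      continuous_invFun := continuous_const.matrix_mulVec continuous_id }
  have h0 := zero_mem_interior_attain A B hK hε
  have himg : (0 : Fin n → ℝ) ∈
      interior ((fun z => mexp (-(T • A)) *ᵥ z) '' attain A B ε) := by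
    have heq : ((fun z => mexp (-(T • A)) *ᵥ z) '' attain A B ε) = F '' attain A B ε := rfl
    rw [heq, ← F.image_interior]
    exact ⟨0, h0, by simp [F, Matrix.mulVec_zero]⟩
  have hxsub : (fun y => x + y) '' ((fun z => mexp (-(T • A)) *ᵥ z) '' attain A B ε) ⊆
      attain A B (T + ε) := by
    rw [hsplit]
    rintro _ ⟨b, hb, rfl⟩
    exact Set.add_mem_add hx hb
  have hxmem : x ∈ interior ((fun y => x + y) ''
      ((fun z => mexp (-(T • A)) *ᵥ z) '' attain A B ε)) := by
    have heq : ((fun y => x + y) '' ((fun z => mexp (-(T • A)) *ᵥ z) '' attain A B ε)) =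
        (Homeomorph.addLeft x) '' ((fun z => mexp (-(T • A)) *ᵥ z) '' attain A B ε) := rfl
    rw [heq, ← (Homeomorph.addLeft x).image_interior]
    exact ⟨0, himg, by simp⟩
  exact interior_mono hxsub hxmem
end

section
/- If x₀ ∈ 𝒜_T, then the infimum of J(u) = ∫₀^T |u(t)| dt over admissible controls u with x(T;u) = 0 and x(0;u) = x₀ is attained by some admissible control ū. -/
open MeasureTheory Set Filter Matrix

noncomputable section Stmt4Aux
open scoped ENNReal RealInnerProductSpace

namespace Stmt4

abbrev E (m : ℕ) := EuclideanSpace ℝ (Fin m)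

def toE {m : ℕ} (v : Fin m → ℝ) : E m := (WithLp.equiv 2 (Fin m → ℝ)).symm v

lemma toE_apply {m : ℕ} (v : Fin m → ℝ) (j : Fin m) : toE v j = v j := rfl

lemma eNorm_toE {m : ℕ} (v : Fin m → ℝ) : eNorm v = ‖toE v‖ := by
  rw [EuclideanSpace.norm_eq]
  simp [eNorm, Real.norm_eq_abs, sq_abs, toE_apply]

lemma inner_toE {m : ℕ} (v w : Fin m → ℝ) : ⟪toE v, toE w⟫ = ∑ j, v j * w j := by
  simp [PiLp.inner_apply, toE_apply, RCLike.inner_apply, conj_trivial, mul_comm]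

def mes (T : ℝ) : Measure ℝ := volume.restrict (Ioc (0:ℝ) T)

instance {T : ℝ} : IsFiniteMeasure (mes T) :=
  ⟨by rw [mes, Measure.restrict_apply_univ]; exact measure_Ioc_lt_top⟩

lemma costJ_eq_mes {m : ℕ} (T : ℝ) (u : ℝ → Fin m → ℝ) :
    (∫ t in Ioc (0:ℝ) T, eNorm (u t)) = ∫ t, eNorm (u t) ∂(mes T) := rfl

section

attribute [local instance] Matrix.linftyOpNormedRing Matrix.linftyOpNormedAlgebra

lemma mexp_cont {n : ℕ} (A : Matrix (Fin n) (Fin n) ℝ) :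
    Continuous fun t : ℝ => mexp (-(t • A)) := by
  have h : Continuous (NormedSpace.exp : Matrix (Fin n) (Fin n) ℝ → _) :=
    NormedSpace.exp_continuous
  exact h.comp (by continuity)

end

def Nm {n m : ℕ} (A : Matrix (Fin n) (Fin n) ℝ) (B : Matrix (Fin n) (Fin m) ℝ) (t : ℝ) :
    Matrix (Fin n) (Fin m) ℝ := mexp (-(t • A)) * B

lemma continuous_Nm_entry {n m : ℕ} (A : Matrix (Fin n) (Fin n) ℝ)
    (B : Matrix (Fin n) (Fin m) ℝ) (i : Fin n) (j : Fin m) :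
    Continuous fun t => Nm A B t i j := by
  have h := mexp_cont A
  simp only [Nm, Matrix.mul_apply]
  exact continuous_finset_sum _ fun k _ =>
    ((continuous_apply k).comp ((continuous_apply i).comp h)).mul continuous_const


variable {n m : ℕ}

def gfun (A : Matrix (Fin n) (Fin n) ℝ) (B : Matrix (Fin n) (Fin m) ℝ) (i : Fin n) :
    ℝ → E m := fun t => toE (fun j => Nm A B t i j)

lemma continuous_gfun (A : Matrix (Fin n) (Fin n) ℝ) (B : Matrix (Fin n) (Fin m) ℝ)
    (i : Fin n) : Continuous (gfun A B i) :=
  (PiLp.continuous_toLp (p := 2) (β := fun _ : Fin m => ℝ)).comp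
    (continuous_pi fun j => continuous_Nm_entry A B i j)

lemma memℒp_gfun (A : Matrix (Fin n) (Fin n) ℝ) (B : Matrix (Fin n) (Fin m) ℝ) (T : ℝ)
    (i : Fin n) : MemLp (gfun A B i) 2 (mes T) := by
  obtain ⟨C, hC⟩ := (isCompact_Icc (a := (0:ℝ)) (b := T)).exists_bound_of_continuousOn
    (continuous_gfun A B i).continuousOn
  refine MemLp.of_bound (continuous_gfun A B i).aestronglyMeasurable C ?_
  have h := ae_restrict_mem (μ := volume) (measurableSet_Ioc (a := (0:ℝ)) (b := T))
  filter_upwards [h] with t ht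
  exact hC t ⟨le_of_lt ht.1, ht.2⟩

def gL (A : Matrix (Fin n) (Fin n) ℝ) (B : Matrix (Fin n) (Fin m) ℝ) (T : ℝ) (i : Fin n) :
    Lp (E m) 2 (mes T) := (memℒp_gfun A B T i).toLp _

def Jf (T : ℝ) {m : ℕ} (w : Lp (E m) 2 (mes T)) : ℝ := ∫ t, ‖(w : ℝ → E m) t‖ ∂(mes T)

lemma Jf_nonneg (T : ℝ) (w : Lp (E m) 2 (mes T)) : 0 ≤ Jf T w :=
  integral_nonneg fun t => norm_nonneg _

lemma Jf_neg (T : ℝ) (w : Lp (E m) 2 (mes T)) : Jf T (-w) = Jf T w := by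
  refine integral_congr_ae ?_
  filter_upwards [Lp.coeFn_neg w] with t ht
  rw [ht, Pi.neg_apply, norm_neg]

lemma inner_le_Jf (T : ℝ) (v w : Lp (E m) 2 (mes T))
    (hw : ∀ᵐ t ∂(mes T), ‖(w : ℝ → E m) t‖ ≤ 1) : ⟪v, w⟫ ≤ Jf T v := by
  rw [L2.inner_def]
  refine integral_mono_ae (L2.integrable_inner v w)
    ((Lp.memLp v).integrable one_le_two).norm ?_
  filter_upwards [hw] with t ht
  calc ⟪(v : ℝ → E m) t, (w : ℝ → E m) t⟫ ≤ ‖(v : ℝ → E m) t‖ * ‖(w : ℝ → E m) t‖ :=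
        real_inner_le_norm _ _
    _ ≤ ‖(v : ℝ → E m) t‖ * 1 := mul_le_mul_of_nonneg_left ht (norm_nonneg _)
    _ = ‖(v : ℝ → E m) t‖ := mul_one _


lemma exists_sign (T : ℝ) (v : Lp (E m) 2 (mes T)) :
    ∃ w : Lp (E m) 2 (mes T), (∀ᵐ t ∂(mes T), ‖(w : ℝ → E m) t‖ ≤ 1) ∧ ⟪v, w⟫ = Jf T v := by
  set f : ℝ → E m := (v : ℝ → E m) with hf
  have hsm : StronglyMeasurable f := (v : ℝ →ₘ[mes T] E m).stronglyMeasurable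
  set s : ℝ → E m := fun t => ‖f t‖⁻¹ • f t with hs
  have hs_meas : StronglyMeasurable s :=
    ((hsm.measurable.norm.inv).stronglyMeasurable.smul hsm)
  have hs_bd : ∀ t, ‖s t‖ ≤ 1 := by
    intro t
    rcases eq_or_ne (f t) 0 with h | h
    · simp [hs, h]
    · rw [hs]
      simp only [norm_smul, Real.norm_eq_abs, abs_inv, abs_norm]
      rw [inv_mul_cancel₀ (norm_ne_zero_iff.mpr h)]
  have hs_inner : ∀ t, ⟪f t, s t⟫ = ‖f t‖ := by
    intro t
    rcases eq_or_ne (f t) 0 with h | h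
    · simp [hs, h]
    · rw [hs]
      simp only [real_inner_smul_right]
      rw [real_inner_self_eq_norm_mul_norm, ← mul_assoc,
        inv_mul_cancel₀ (norm_ne_zero_iff.mpr h), one_mul]
  have hmem : MemLp s 2 (mes T) :=
    MemLp.of_bound hs_meas.aestronglyMeasurable 1 (Eventually.of_forall hs_bd)
  refine ⟨hmem.toLp s, ?_, ?_⟩
  · filter_upwards [hmem.coeFn_toLp] with t ht
    rw [ht]; exact hs_bd t
  · rw [L2.inner_def]
    refine integral_congr_ae ?_
    filter_upwards [hmem.coeFn_toLp] with t ht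
    rw [ht]; exact hs_inner t

lemma ae_le_one_of_forall_inner (T : ℝ) (v : Lp (E m) 2 (mes T))
    (h : ∀ w : Lp (E m) 2 (mes T), ⟪v, w⟫ ≤ Jf T w) :
    ∀ᵐ t ∂(mes T), ‖(v : ℝ → E m) t‖ ≤ 1 := by
  set f : ℝ → E m := (v : ℝ → E m) with hf
  have hsm : StronglyMeasurable f := (v : ℝ →ₘ[mes T] E m).stronglyMeasurable
  have hnorm : Measurable fun t => ‖f t‖ := hsm.measurable.norm
  set Ek : ℕ → Set ℝ := fun k => {t | 1 + 1/(k+1 : ℝ) ≤ ‖f t‖} with hEk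
  have hEkm : ∀ k, MeasurableSet (Ek k) := fun k =>
    measurableSet_le measurable_const hnorm
  have hEk0 : ∀ k, mes T (Ek k) = 0 := by
    intro k
    by_contra hk
    -- construct the indicator sign field
    set s : ℝ → E m := fun t => (Ek k).indicator (fun t => ‖f t‖⁻¹ • f t) t with hs
    have hs_meas : StronglyMeasurable s :=
      ((hsm.measurable.norm.inv).stronglyMeasurable.smul hsm).indicator (hEkm k)
    have hs_bd : ∀ t, ‖s t‖ ≤ 1 := by
      intro t
      rw [hs]
      by_cases ht : t ∈ Ek k
      · simp only [indicator_of_mem ht]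
        rcases eq_or_ne (f t) 0 with h0 | h0
        · simp [h0]
        · simp only [norm_smul, Real.norm_eq_abs, abs_inv, abs_norm]
          rw [inv_mul_cancel₀ (norm_ne_zero_iff.mpr h0)]
      · simp only [indicator_of_notMem ht]; simp
    have hmem : MemLp s 2 (mes T) :=
      MemLp.of_bound hs_meas.aestronglyMeasurable 1 (Eventually.of_forall hs_bd)
    have hint_f : Integrable (fun t => ‖f t‖) (mes T) :=
      ((Lp.memLp v).integrable one_le_two).norm
    have hfne : ∀ t ∈ Ek k, f t ≠ 0 := by
      intro t ht h0
      have := ht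
      rw [hEk] at this
      simp only [mem_setOf_eq, h0, norm_zero] at this
      have : (0:ℝ) < 1/(k+1:ℝ) := by positivity
      linarith [this]
    -- compute the inner product
    have hinner : ⟪v, hmem.toLp s⟫ = ∫ t in Ek k, ‖f t‖ ∂(mes T) := by
      rw [L2.inner_def, ← integral_indicator (hEkm k)]
      refine integral_congr_ae ?_
      filter_upwards [hmem.coeFn_toLp] with t ht
      rw [ht, hs]
      by_cases htE : t ∈ Ek k
      · simp only [indicator_of_mem htE]
        have h0 := hfne t htE
        simp only [real_inner_smul_right]
        rw [real_inner_self_eq_norm_mul_norm, ← mul_assoc,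
          inv_mul_cancel₀ (norm_ne_zero_iff.mpr h0), one_mul]
      · simp only [indicator_of_notMem htE, inner_zero_right]
    have hJs : Jf T (hmem.toLp s) = ((mes T) (Ek k)).toReal := by
      have : Jf T (hmem.toLp s) = ∫ t, (Ek k).indicator (fun _ => (1:ℝ)) t ∂(mes T) := by
        refine integral_congr_ae ?_
        filter_upwards [hmem.coeFn_toLp] with t ht
        rw [ht, hs]
        by_cases htE : t ∈ Ek k
        · simp only [indicator_of_mem htE]
          have h0 := hfne t htE
          simp only [norm_smul, Real.norm_eq_abs, abs_inv, abs_norm]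
          rw [inv_mul_cancel₀ (norm_ne_zero_iff.mpr h0)]
        · simp only [indicator_of_notMem htE, norm_zero]
      rw [this, integral_indicator_const _ (hEkm k), smul_eq_mul, mul_one, measureReal_def]
    have hlow : (1 + 1/(k+1:ℝ)) * ((mes T) (Ek k)).toReal ≤ ∫ t in Ek k, ‖f t‖ ∂(mes T) := by
      have hmono : (∫ _ in Ek k, (1 + 1/(k+1:ℝ)) ∂(mes T)) ≤ ∫ t in Ek k, ‖f t‖ ∂(mes T) :=
        setIntegral_mono_on ((integrableOn_const_iff (C := 1 + 1/(k+1:ℝ))).mpr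
          (Or.inr (measure_lt_top (mes T) (Ek k)))) hint_f.integrableOn (hEkm k)
          (fun t ht => ht)
      calc (1 + 1/(k+1:ℝ)) * ((mes T) (Ek k)).toReal
            = ∫ _ in Ek k, (1 + 1/(k+1:ℝ)) ∂(mes T) := by
              rw [setIntegral_const, smul_eq_mul, mul_comm, measureReal_def]
        _ ≤ _ := hmono
    have hpos : 0 < ((mes T) (Ek k)).toReal :=
      ENNReal.toReal_pos hk (measure_ne_top _ _)
    have hup := h (hmem.toLp s)
    rw [hinner, hJs] at hup
    have hd : (0:ℝ) < 1/(k+1:ℝ) := by positivity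
    nlinarith [hlow, hpos, mul_pos hd hpos]
  have hsub : {t | ¬ ‖f t‖ ≤ 1} ⊆ ⋃ k, Ek k := by
    intro t ht
    simp only [mem_setOf_eq, not_le] at ht
    obtain ⟨k, hk⟩ := exists_nat_one_div_lt (show (0:ℝ) < ‖f t‖ - 1 by linarith)
    exact mem_iUnion.mpr ⟨k, by simp only [hEk, mem_setOf_eq]; push_cast; linarith⟩
  have : mes T {t | ¬ ‖f t‖ ≤ 1} = 0 :=
    measure_mono_null hsub (measure_iUnion_null hEk0)
  exact this


lemma abs_le_eNorm {m : ℕ} (v : Fin m → ℝ) (j : Fin m) : |v j| ≤ eNorm v := by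
  rw [eNorm, ← Real.sqrt_sq_eq_abs]
  exact Real.sqrt_le_sqrt (Finset.single_le_sum (f := fun i => v i ^ 2)
    (fun i _ => sq_nonneg _) (Finset.mem_univ j))

variable {T : ℝ} {u : ℝ → Fin m → ℝ}

lemma memℒp_toE_comp (hu : Admissible u) : MemLp (fun t => toE (u t)) 2 (mes T) := by
  refine MemLp.of_bound ?_ 1 (Eventually.of_forall fun t => ?_)
  · exact ((PiLp.continuous_toLp (p := 2) (β := fun _ : Fin m => ℝ)).measurable.comp
      hu.1).stronglyMeasurable.aestronglyMeasurable
  · rw [← eNorm_toE]; exact hu.2 t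

def uLp (T : ℝ) (hu : Admissible u) : Lp (E m) 2 (mes T) :=
  (memℒp_toE_comp hu).toLp _

lemma uLp_ae_bound (hu : Admissible u) :
    ∀ᵐ t ∂(mes T), ‖((uLp T hu : Lp (E m) 2 (mes T)) : ℝ → E m) t‖ ≤ 1 := by
  filter_upwards [(memℒp_toE_comp hu).coeFn_toLp] with t ht
  rw [uLp, ht, ← eNorm_toE]; exact hu.2 t

lemma costJ_eq_Jf (hu : Admissible u) :
    (∫ t in Ioc (0:ℝ) T, eNorm (u t)) = Jf T (uLp T hu) := by
  rw [costJ_eq_mes, Jf]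
  refine integral_congr_ae ?_
  filter_upwards [(memℒp_toE_comp hu).coeFn_toLp] with t ht
  rw [uLp, ht, ← eNorm_toE]

lemma inner_gL_uLp (A : Matrix (Fin n) (Fin n) ℝ) (B : Matrix (Fin n) (Fin m) ℝ)
    (hu : Admissible u) (i : Fin n) :
    ⟪gL A B T i, uLp T hu⟫ = ∫ t, (Nm A B t *ᵥ u t) i ∂(mes T) := by
  rw [L2.inner_def]
  refine integral_congr_ae ?_
  filter_upwards [(memℒp_gfun A B T i).coeFn_toLp, (memℒp_toE_comp hu).coeFn_toLp]
    with t h1 h2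
  rw [gL, uLp, h1, h2]
  simp only [gfun]
  rw [inner_toE]
  simp [Matrix.mulVec, dotProduct]

lemma exists_entry_bound (A : Matrix (Fin n) (Fin n) ℝ) (B : Matrix (Fin n) (Fin m) ℝ)
    (T : ℝ) : ∃ C : ℝ, 0 ≤ C ∧ ∀ t ∈ Icc (0:ℝ) T, ∀ i j, |Nm A B t i j| ≤ C := by
  have hcont : Continuous fun t => ∑ i, ∑ j, |Nm A B t i j| :=
    continuous_finset_sum _ fun i _ => continuous_finset_sum _ fun j _ =>
      (continuous_Nm_entry A B i j).abs
  obtain ⟨C, hC⟩ := (isCompact_Icc (a := (0:ℝ)) (b := T)).exists_bound_of_continuousOn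
    hcont.continuousOn
  refine ⟨max C 0, le_max_right _ _, fun t ht i j => ?_⟩
  have h1 : |Nm A B t i j| ≤ ∑ i', ∑ j', |Nm A B t i' j'| := by
    calc |Nm A B t i j| ≤ ∑ j', |Nm A B t i j'| :=
          Finset.single_le_sum (f := fun j' => |Nm A B t i j'|)
            (fun j' _ => abs_nonneg _) (Finset.mem_univ j)
      _ ≤ ∑ i', ∑ j', |Nm A B t i' j'| :=
          Finset.single_le_sum (f := fun i' => ∑ j', |Nm A B t i' j'|)
            (fun i' _ => Finset.sum_nonneg fun _ _ => abs_nonneg _) (Finset.mem_univ i)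
  have h2 := hC t ht
  rw [Real.norm_eq_abs] at h2
  have h3 : ∑ i', ∑ j', |Nm A B t i' j'| ≤ C := le_of_abs_le h2
  exact le_max_of_le_left (h1.trans h3)

lemma integrable_F (A : Matrix (Fin n) (Fin n) ℝ) (B : Matrix (Fin n) (Fin m) ℝ)
    (hu : Admissible u) : Integrable (fun t => Nm A B t *ᵥ u t) (mes T) := by
  obtain ⟨C, hC0, hC⟩ := exists_entry_bound A B T
  have hmeas : Measurable fun t => Nm A B t *ᵥ u t := by
    refine measurable_pi_lambda _ fun i => ?_
    simp only [Matrix.mulVec, dotProduct]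
    exact Finset.measurable_sum _ fun j _ =>
      ((continuous_Nm_entry A B i j).measurable).mul ((measurable_pi_apply j).comp hu.1)
  refine ⟨hmeas.stronglyMeasurable.aestronglyMeasurable, ?_⟩
  refine HasFiniteIntegral.of_bounded (C := (m : ℝ) * C) ?_
  have h := ae_restrict_mem (μ := volume) (measurableSet_Ioc (a := (0:ℝ)) (b := T))
  filter_upwards [h] with t ht
  rw [pi_norm_le_iff_of_nonneg (by positivity)]
  intro i
  rw [Real.norm_eq_abs]
  calc |(Nm A B t *ᵥ u t) i| = |∑ j, Nm A B t i j * u t j| := by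
        simp [Matrix.mulVec, dotProduct]
    _ ≤ ∑ j, |Nm A B t i j * u t j| := Finset.abs_sum_le_sum_abs _ _
    _ ≤ ∑ _j : Fin m, C := by
        refine Finset.sum_le_sum fun j _ => ?_
        rw [abs_mul]
        have h1 := hC t ⟨le_of_lt ht.1, ht.2⟩ i j
        have h2 : |u t j| ≤ 1 := (abs_le_eNorm (u t) j).trans (hu.2 t)
        calc |Nm A B t i j| * |u t j| ≤ C * 1 :=
              mul_le_mul h1 h2 (abs_nonneg _) hC0
          _ = C := mul_one _
    _ = (m : ℝ) * C := by simp [Finset.sum_const, nsmul_eq_mul]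

lemma integral_component (F : ℝ → (Fin n → ℝ)) (hF : Integrable F (mes T)) (i : Fin n) :
    (∫ t, F t ∂(mes T)) i = ∫ t, F t i ∂(mes T) :=
  ((ContinuousLinearMap.proj (R := ℝ) (φ := fun _ : Fin n => ℝ) i).integral_comp_comm hF).symm

lemma steers_iff (A : Matrix (Fin n) (Fin n) ℝ) (B : Matrix (Fin n) (Fin m) ℝ)
    (x₀ : Fin n → ℝ) (hu : Admissible u) :
    (x₀ + ∫ t in Ioc (0:ℝ) T, mexp (-(t • A)) *ᵥ (B *ᵥ u t) = 0) ↔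
      ∀ i, ⟪gL A B T i, uLp T hu⟫ = -(x₀ i) := by
  have hrw : (fun t => mexp (-(t • A)) *ᵥ (B *ᵥ u t)) = fun t => Nm A B t *ᵥ u t := by
    funext t; rw [Nm, ← Matrix.mulVec_mulVec]
  have hint : (∫ t in Ioc (0:ℝ) T, mexp (-(t • A)) *ᵥ (B *ᵥ u t)) =
      ∫ t, Nm A B t *ᵥ u t ∂(mes T) := by
    rw [show (∫ t in Ioc (0:ℝ) T, mexp (-(t • A)) *ᵥ (B *ᵥ u t)) =
      ∫ t, mexp (-(t • A)) *ᵥ (B *ᵥ u t) ∂(mes T) from rfl, hrw]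
  constructor
  · intro hst i
    rw [inner_gL_uLp A B hu i, ← integral_component _ (integrable_F A B hu) i]
    have := congrFun hst i
    rw [Pi.add_apply, Pi.zero_apply, hint] at this
    linarith
  · intro hst
    funext i
    rw [Pi.add_apply, Pi.zero_apply, hint]
    have := hst i
    rw [inner_gL_uLp A B hu i, ← integral_component _ (integrable_F A B hu) i] at this
    linarith


def psi {m : ℕ} (T : ℝ) (v : Lp (E m) 2 (mes T)) :
    WeakDual ℝ (Lp (E m) 2 (mes T)) :=
  StrongDual.toWeakDual (InnerProductSpace.toDual ℝ _ v)

lemma psi_apply {m : ℕ} (T : ℝ) (v w : Lp (E m) 2 (mes T)) : psi T v w = ⟪v, w⟫ := by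
  rw [psi]
  exact InnerProductSpace.toDual_apply_apply

end Stmt4

end Stmt4Aux

open scoped ENNReal RealInnerProductSpace in
open Stmt4 in
theorem stmt4 {n m : ℕ} (A : Matrix (Fin n) (Fin n) ℝ) (B : Matrix (Fin n) (Fin m) ℝ)
    (T : ℝ) (hT : 0 < T) (x₀ : Fin n → ℝ)
    (hx₀ : ∃ u : ℝ → Fin m → ℝ, Admissible u ∧ Steers A B x₀ T u) :
    ∃ ubar : ℝ → Fin m → ℝ, Admissible ubar ∧ Steers A B x₀ T ubar ∧
      ∀ u : ℝ → Fin m → ℝ, Admissible u → Steers A B x₀ T u → costJ T ubar ≤ costJ T u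
 := by
  classical
  set S : Set ℝ := {c | ∃ u : ℝ → Fin m → ℝ, Admissible u ∧ Steers A B x₀ T u ∧ c = costJ T u}
    with hS
  have hSne : S.Nonempty := by
    obtain ⟨u, hu, hst⟩ := hx₀
    exact ⟨costJ T u, u, hu, hst, rfl⟩
  have hSbd : BddBelow S := by
    refine ⟨0, fun a ha => ?_⟩
    obtain ⟨u, hu, hst, rfl⟩ := ha
    exact integral_nonneg fun t => Real.sqrt_nonneg _
  set c := sInf S with hc
  set H := Lp (E m) 2 (mes T) with hH
  set SK : Set (WeakDual ℝ H) := {φ | ∀ w : H, φ w ≤ Jf T w} with hSK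
  set SP : Set (WeakDual ℝ H) := {φ | ∀ i, φ (gL A B T i) = -(x₀ i)} with hSP
  set SJ : ℕ → Set (WeakDual ℝ H) := fun q =>
    {φ | ∀ w : H, (∀ᵐ t ∂(mes T), ‖(w : ℝ → E m) t‖ ≤ 1) → φ w ≤ c + 1/(q+1)} with hSJ
  set D : ℕ → Set (WeakDual ℝ H) := fun q => SK ∩ SP ∩ SJ q with hD
  -- closedness
  have hSKc : IsClosed SK := by
    have : SK = ⋂ w : H, {φ : WeakDual ℝ H | φ w ≤ Jf T w} := by
      ext φ; simp [hSK, Set.mem_iInter]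
    rw [this]
    exact isClosed_iInter fun w => isClosed_le (WeakDual.eval_continuous w) continuous_const
  have hSPc : IsClosed SP := by
    have : SP = ⋂ i : Fin n, {φ : WeakDual ℝ H | φ (gL A B T i) = -(x₀ i)} := by
      ext φ; simp [hSP, Set.mem_iInter]
    rw [this]
    exact isClosed_iInter fun i =>
      isClosed_eq (WeakDual.eval_continuous _) continuous_const
  have hSJc : ∀ q, IsClosed (SJ q) := by
    intro q
    have : SJ q = ⋂ (w : H) (_ : ∀ᵐ t ∂(mes T), ‖(w : ℝ → E m) t‖ ≤ 1),
        {φ : WeakDual ℝ H | φ w ≤ c + 1/(q+1)} := by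
      ext φ; simp only [hSJ, Set.mem_iInter, Set.mem_setOf_eq]
    rw [this]
    exact isClosed_iInter fun w => isClosed_iInter fun _ =>
      isClosed_le (WeakDual.eval_continuous w) continuous_const
  have hDc : ∀ q, IsClosed (D q) := fun q => (hSKc.inter hSPc).inter (hSJc q)
  -- ball bound
  set R : ℝ := (measureUnivNNReal (mes T) : ℝ) ^ ((2:ℝ≥0∞).toReal⁻¹) with hR
  have hR0 : (0:ℝ) ≤ R := by positivity
  have hnormle : ∀ w : H, (∀ᵐ t ∂(mes T), ‖(w : ℝ → E m) t‖ ≤ 1) → ‖w‖ ≤ R := by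
    intro w hw
    have := Lp.norm_le_of_ae_bound (f := w) zero_le_one hw
    rwa [mul_one] at this
  have hJle : ∀ w : H, Jf T w ≤ ‖w‖ * R := by
    intro w
    obtain ⟨s, hs1, hs2⟩ := exists_sign T w
    calc Jf T w = ⟪w, s⟫ := hs2.symm
      _ ≤ ‖w‖ * ‖s‖ := real_inner_le_norm _ _
      _ ≤ ‖w‖ * R := mul_le_mul_of_nonneg_left (hnormle s hs1) (norm_nonneg w)
  have hSK_sub : SK ⊆ WeakDual.toStrongDual ⁻¹'
      Metric.closedBall (0 : StrongDual ℝ H) R := by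
    intro φ hφ
    have hb : ∀ w : H, |φ w| ≤ R * ‖w‖ := by
      intro w
      rw [abs_le]
      constructor
      · have h1 := hφ (-w)
        rw [map_neg] at h1
        have h2 : Jf T (-w) ≤ ‖w‖ * R := (hJle (-w)).trans_eq (by rw [norm_neg])
        have := h1.trans h2
        rw [mul_comm] at this
        linarith
      · exact (hφ w).trans ((hJle w).trans_eq (mul_comm _ _))
    have hop : ‖WeakDual.toStrongDual φ‖ ≤ R :=
      ContinuousLinearMap.opNorm_le_bound _ hR0 fun w => by
        rw [Real.norm_eq_abs]; exact hb w
    simpa [Metric.mem_closedBall, dist_zero_right] using hop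
  have hD0comp : IsCompact (D 0) :=
    (WeakDual.isCompact_closedBall (𝕜 := ℝ) (E := H) (0 : StrongDual ℝ H) R).of_isClosed_subset
      (hDc 0) (fun φ hφ => hSK_sub hφ.1.1)
  -- nonemptiness
  have hDne : ∀ q, (D q).Nonempty := by
    intro q
    have hpos : (0:ℝ) < 1/(q+1) := by positivity
    obtain ⟨a, haS, hlt⟩ := exists_lt_of_csInf_lt hSne (lt_add_of_pos_right c hpos)
    obtain ⟨u, hu, hst, rfl⟩ := haS
    refine ⟨psi T (uLp T hu), ⟨⟨?_, ?_⟩, ?_⟩⟩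
    · intro w
      rw [psi_apply, real_inner_comm]
      exact inner_le_Jf T w _ (uLp_ae_bound hu)
    · intro i
      rw [psi_apply, real_inner_comm]
      exact (steers_iff A B x₀ hu).1 hst i
    · intro w hw
      rw [psi_apply]
      calc ⟪uLp T hu, w⟫ ≤ Jf T (uLp T hu) := inner_le_Jf T _ w hw
        _ = costJ T u := (costJ_eq_Jf hu).symm
        _ ≤ c + 1/(q+1) := le_of_lt hlt
  have hmono : ∀ q, D (q+1) ⊆ D q := by
    intro q φ hφ
    refine ⟨hφ.1, fun w hw => (hφ.2 w hw).trans ?_⟩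
    have : 1/((q:ℝ)+1+1) ≤ 1/((q:ℝ)+1) := by
      apply one_div_le_one_div_of_le <;> [positivity; linarith]
    push_cast
    linarith
  obtain ⟨φ, hφ⟩ := IsCompact.nonempty_iInter_of_sequence_nonempty_isCompact_isClosed
    D hmono hDne hD0comp hDc
  have hφq : ∀ q, φ ∈ D q := fun q => Set.mem_iInter.mp hφ q
  -- Riesz representative
  set v : H := (InnerProductSpace.toDual ℝ H).symm (WeakDual.toStrongDual φ) with hv
  have hΨv : ∀ w : H, φ w = ⟪v, w⟫ := by
    intro w
    have h1 : InnerProductSpace.toDual ℝ H v = WeakDual.toStrongDual φ :=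
      LinearIsometryEquiv.apply_symm_apply _ _
    calc φ w = (WeakDual.toStrongDual φ) w := rfl
      _ = (InnerProductSpace.toDual ℝ H v) w := by rw [h1]
      _ = ⟪v, w⟫ := InnerProductSpace.toDual_apply_apply
  have hK : ∀ w : H, ⟪v, w⟫ ≤ Jf T w := fun w => (hΨv w) ▸ (hφq 0).1.1 w
  have hvbd : ∀ᵐ t ∂(mes T), ‖(v : ℝ → E m) t‖ ≤ 1 := ae_le_one_of_forall_inner T v hK
  have hΦ : ∀ i, ⟪v, gL A B T i⟫ = -(x₀ i) := fun i => (hΨv _) ▸ (hφq 0).1.2 i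
  have hJv : Jf T v ≤ c := by
    obtain ⟨s, hs1, hs2⟩ := exists_sign T v
    have hall : ∀ q : ℕ, Jf T v ≤ c + 1/(q+1) := by
      intro q
      have := (hφq q).2 s hs1
      rw [hΨv, hs2] at this
      exact this
    refine le_of_forall_pos_le_add fun ε hε => ?_
    obtain ⟨q, hq⟩ := exists_nat_one_div_lt hε
    exact (hall q).trans (by push_cast at hq ⊢; linarith)
  -- build the optimal control
  set f : ℝ → E m := (v : ℝ → E m) with hfdef
  have hsm : StronglyMeasurable f := (v : ℝ →ₘ[mes T] E m).stronglyMeasurable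
  set ub : ℝ → Fin m → ℝ :=
    fun t => if ‖f t‖ ≤ 1 then (WithLp.equiv 2 (Fin m → ℝ)) (f t) else 0 with hub
  have hub_meas : Measurable ub :=
    Measurable.ite (measurableSet_le hsm.measurable.norm measurable_const)
      ((PiLp.continuous_ofLp (p := 2) (β := fun _ : Fin m => ℝ)).measurable.comp hsm.measurable)
      measurable_const
  have hub_toE : ∀ t, ‖f t‖ ≤ 1 → toE (ub t) = f t := by
    intro t h
    rw [hub]
    simp only [if_pos h]
    exact (WithLp.equiv 2 (Fin m → ℝ)).symm_apply_apply (f t)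
  have heNorm0 : eNorm (0 : Fin m → ℝ) = 0 := by
    simp [eNorm]
  have hub_bd : ∀ t, eNorm (ub t) ≤ 1 := by
    intro t
    by_cases h : ‖f t‖ ≤ 1
    · rw [eNorm_toE, hub_toE t h]; exact h
    · rw [hub]; simp only [if_neg h]; rw [heNorm0]; norm_num
  have hub_adm : Admissible ub := ⟨hub_meas, hub_bd⟩
  have hub_ae : (fun t => toE (ub t)) =ᵐ[mes T] f := by
    filter_upwards [hvbd] with t ht
    exact hub_toE t ht
  have hub_Lp : uLp T hub_adm = v := by
    rw [uLp]
    have := MemLp.toLp_congr (memℒp_toE_comp hub_adm) (Lp.memLp v) hub_ae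
    rw [this, Lp.toLp_coeFn]
  refine ⟨ub, hub_adm, ?_, ?_⟩
  · exact (steers_iff A B x₀ hub_adm).2 fun i => by
      rw [hub_Lp, real_inner_comm]; exact hΦ i
  · intro u hu hst
    have h1 : costJ T ub = Jf T v := by rw [show costJ T ub = _ from costJ_eq_Jf hub_adm, hub_Lp]
    have h2 : c ≤ costJ T u := csInf_le hSbd ⟨u, hu, hst, rfl⟩
    rw [h1]
    exact hJv.trans h2
end

section
/- For the double integrator, if u is an admissible control with ε ≤ u(t) ≤ 1-ε for some ε > 0 steering x₀ to the origin in time T, and v ∈ L^∞([0,T];ℝ) satisfies ∫₀^T v(t) dt = 0 and ∫₀^T t v(t) dt = 0, then for all s sufficiently close to 0, u + sv is also an admissible control steering x₀ to the origin in time T with the same cost ∫₀^T |u + sv| = ∫₀^T |u|; hence the L¹-optimal control is not unique. -/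
open MeasureTheory Set Filter

theorem stmt6 (T : ℝ) (hT : 0 < T) (ε : ℝ) (hε : 0 < ε)
    (u v : ℝ → ℝ) (humeas : Measurable u) (hvmeas : Measurable v)
    (hu : ∀ t ∈ Ioc (0:ℝ) T, ε ≤ u t ∧ u t ≤ 1 - ε)
    (hvbd : ∃ C : ℝ, ∀ t, |v t| ≤ C)
    (hv0 : (∫ t in Ioc (0:ℝ) T, v t) = 0)
    (hv1 : (∫ t in Ioc (0:ℝ) T, t * v t) = 0)
    (x₀ : ℝ × ℝ)
    (hsteer2 : x₀.2 = -∫ t in Ioc (0:ℝ) T, u t)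
    (hsteer1 : x₀.1 = ∫ t in Ioc (0:ℝ) T, t * u t) :
    ∃ δ > 0, ∀ s : ℝ, |s| < δ →
      (∀ t ∈ Ioc (0:ℝ) T, |u t + s * v t| ≤ 1) ∧
      x₀.2 = -∫ t in Ioc (0:ℝ) T, (u t + s * v t) ∧
      x₀.1 = ∫ t in Ioc (0:ℝ) T, t * (u t + s * v t) ∧
      (∫ t in Ioc (0:ℝ) T, |u t + s * v t|) = ∫ t in Ioc (0:ℝ) T, |u t| := by
  obtain ⟨C, hC⟩ := hvbd
  have hC0 : 0 ≤ C := le_trans (abs_nonneg _) (hC 0)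
  have hμ : MeasureTheory.volume (Ioc (0:ℝ) T) < ⊤ := measure_Ioc_lt_top
  -- integrability facts
  have hconst : ∀ c : ℝ, IntegrableOn (fun _ : ℝ => c) (Ioc 0 T) := fun c =>
    integrableOn_const hμ.ne
  have hui : IntegrableOn u (Ioc 0 T) := by
    refine (hconst 1).mono' humeas.aestronglyMeasurable.restrict ?_
    refine (ae_restrict_iff' measurableSet_Ioc).2 (ae_of_all _ fun t ht => ?_)
    obtain ⟨h1, h2⟩ := hu t ht
    rw [Real.norm_eq_abs, abs_of_pos (lt_of_lt_of_le hε h1)]; linarith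
  have hvi : IntegrableOn v (Ioc 0 T) := by
    refine (hconst C).mono' hvmeas.aestronglyMeasurable.restrict ?_
    exact (ae_restrict_iff' measurableSet_Ioc).2 (ae_of_all _ fun t ht => hC t)
  have htvi : IntegrableOn (fun t => t * v t) (Ioc 0 T) := by
    refine (hconst (T * C)).mono' (measurable_id.mul hvmeas).aestronglyMeasurable.restrict ?_
    refine (ae_restrict_iff' measurableSet_Ioc).2 (ae_of_all _ fun t ht => ?_)
    rw [Real.norm_eq_abs, abs_mul]
    exact mul_le_mul (by rw [abs_of_pos ht.1]; exact ht.2) (hC t) (abs_nonneg _) hT.le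
  have htui : IntegrableOn (fun t => t * u t) (Ioc 0 T) := by
    refine (hconst (T * 1)).mono' (measurable_id.mul humeas).aestronglyMeasurable.restrict ?_
    refine (ae_restrict_iff' measurableSet_Ioc).2 (ae_of_all _ fun t ht => ?_)
    obtain ⟨h1, h2⟩ := hu t ht
    rw [Real.norm_eq_abs, abs_mul]
    refine mul_le_mul (by rw [abs_of_pos ht.1]; exact ht.2) ?_ (abs_nonneg _) hT.le
    rw [abs_of_pos (lt_of_lt_of_le hε h1)]; linarith
  refine ⟨ε / (C + 1), by positivity, fun s hs => ?_⟩
  have key : ∀ t ∈ Ioc (0:ℝ) T, |s * v t| < ε := by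
    intro t ht
    rw [abs_mul]
    calc |s| * |v t| ≤ |s| * (C + 1) := by
          refine mul_le_mul_of_nonneg_left ?_ (abs_nonneg s)
          linarith [hC t]
      _ < ε / (C + 1) * (C + 1) := by
          refine mul_lt_mul_of_pos_right hs (by positivity)
      _ = ε := div_mul_cancel₀ _ (by positivity)
  have hpos : ∀ t ∈ Ioc (0:ℝ) T, 0 < u t + s * v t := by
    intro t ht
    have := key t ht
    have := abs_lt.1 this
    linarith [(hu t ht).1]
  refine ⟨?_, ?_, ?_, ?_⟩
  · intro t ht
    have h1 := (hu t ht).2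
    have h2 := abs_lt.1 (key t ht)
    rw [abs_of_pos (hpos t ht)]; linarith
  · rw [hsteer2]
    congr 1
    rw [integral_add hui (hvi.const_mul s), integral_const_mul, hv0, mul_zero, add_zero]
  · rw [hsteer1]
    have heq : (fun t => t * (u t + s * v t)) = fun t => t * u t + s * (t * v t) := by
      funext t; ring
    rw [heq, integral_add htui (htvi.const_mul s), integral_const_mul, hv1, mul_zero, add_zero]
  · have h1 : (∫ t in Ioc (0:ℝ) T, |u t + s * v t|) = ∫ t in Ioc (0:ℝ) T, (u t + s * v t) :=
      setIntegral_congr_fun measurableSet_Ioc fun t ht => abs_of_pos (hpos t ht)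
    have h2 : (∫ t in Ioc (0:ℝ) T, |u t|) = ∫ t in Ioc (0:ℝ) T, u t :=
      setIntegral_congr_fun measurableSet_Ioc fun t ht =>
        abs_of_pos (lt_of_lt_of_le hε (hu t ht).1)
    rw [h1, h2, integral_add hui (hvi.const_mul s), integral_const_mul, hv0, mul_zero, add_zero]
end

section
/- Let A be hyperbolic and suppose the pair (A,B) satisfies the Kalman rank condition. Then for every nonzero row vector p⁰ ∈ (ℝ^n)*, the function t ↦ |p⁰ e^{tA} B| is not identically equal to 1 on ℝ; in fact it is not constant. -/
open MeasureTheory Set Filter Matrix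

def Hyperbolic {n : ℕ} (A : Matrix (Fin n) (Fin n) ℝ) : Prop :=
  ∀ μ ∈ spectrum ℂ (A.map (Complex.ofReal ·)), μ.re ≠ 0

section Aux
open NormedSpace

variable {n m : ℕ}

/-- Unobservable subspace. -/
noncomputable def unobs (N : Matrix (Fin n) (Fin n) ℂ) (C : Matrix (Fin m) (Fin n) ℂ) :
    Submodule ℂ (Fin n → ℂ) where
  carrier := {x | ∀ k : ℕ, C *ᵥ ((N ^ k) *ᵥ x) = 0}
  add_mem' := by intro a b ha hb; intro k; simp [Matrix.mulVec_add, ha k, hb k]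
  zero_mem' := by intro k; simp
  smul_mem' := by intro a x hx; intro k; simp [Matrix.mulVec_smul, hx k]

/-- Bounded-observation subspace. -/
noncomputable def bddW (N : Matrix (Fin n) (Fin n) ℂ) (C : Matrix (Fin m) (Fin n) ℂ) :
    Submodule ℂ (Fin n → ℂ) where
  carrier := {x | ∃ c : ℝ, ∀ t : ℝ, ‖C *ᵥ (exp (t • N) *ᵥ x)‖ ≤ c}
  add_mem' := by
    rintro a b ⟨c₁, h₁⟩ ⟨c₂, h₂⟩
    exact ⟨c₁ + c₂, fun t => by
      rw [Matrix.mulVec_add, Matrix.mulVec_add]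
      exact (norm_add_le _ _).trans (add_le_add (h₁ t) (h₂ t))⟩
  zero_mem' := ⟨0, fun t => by simp⟩
  smul_mem' := by
    rintro a x ⟨c, h⟩
    exact ⟨‖a‖ * c, fun t => by
      rw [Matrix.mulVec_smul, Matrix.mulVec_smul, norm_smul]
      exact mul_le_mul_of_nonneg_left (h t) (norm_nonneg a)⟩

/-- Observation continuous linear map. -/
noncomputable def obsL (C : Matrix (Fin m) (Fin n) ℂ) (x : Fin n → ℂ) :
    Matrix (Fin n) (Fin n) ℂ →L[ℝ] (Fin m → ℂ) :=
  LinearMap.toContinuousLinearMap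
    { toFun := fun X => C *ᵥ (X *ᵥ x)
      map_add' := by intro X Y; simp [Matrix.add_mulVec, Matrix.mulVec_add]
      map_smul' := by intro r X; simp [Matrix.smul_mulVec, Matrix.mulVec_smul] }

lemma obsL_apply (C : Matrix (Fin m) (Fin n) ℂ) (x : Fin n → ℂ)
    (X : Matrix (Fin n) (Fin n) ℂ) : obsL C x X = C *ᵥ (X *ᵥ x) := rfl

lemma obs_exp {N : Matrix (Fin n) (Fin n) ℂ} {C : Matrix (Fin m) (Fin n) ℂ}
    {x : Fin n → ℂ} {μ : ℂ} {w : Fin m → ℂ}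
    (h : ∀ k : ℕ, C *ᵥ ((N ^ k) *ᵥ x) = μ ^ k • w) (t : ℝ) :
    C *ᵥ (exp (t • N) *ᵥ x) = Complex.exp (t * μ) • w := by
  letI : NormedRing (Matrix (Fin n) (Fin n) ℂ) := Matrix.linftyOpNormedRing
  letI : NormedAlgebra ℝ (Matrix (Fin n) (Fin n) ℂ) := Matrix.linftyOpNormedAlgebra
  have hsum : Summable fun k : ℕ => ((k.factorial : ℝ)⁻¹) • (t • N) ^ k := expSeries_summable' (𝕂 := ℝ) _
  have h1 : C *ᵥ (exp (t • N) *ᵥ x) = ∑' k : ℕ, obsL C x (((k.factorial : ℝ)⁻¹) • (t • N) ^ k) := by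
    rw [← obsL_apply, exp_eq_tsum ℝ]
    exact ((obsL C x).map_tsum hsum)
  have h2 : ∀ k : ℕ, obsL C x (((k.factorial : ℝ)⁻¹) • (t • N) ^ k)
      = (((k.factorial : ℂ)⁻¹) * ((t : ℂ) * μ) ^ k) • w := by
    intro k
    rw [_root_.map_smul, smul_pow, _root_.map_smul, obsL_apply, h k, smul_smul,
      ← smul_assoc, Complex.real_smul]
    congr 1
    push_cast
    ring
  rw [h1]
  have h3 : Summable fun k : ℕ => ((k.factorial : ℂ)⁻¹) * ((t : ℂ) * μ) ^ k := by
    have := expSeries_summable' (𝕂 := ℂ) ((t : ℂ) * μ)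
    simpa [smul_eq_mul] using this
  calc (∑' k : ℕ, obsL C x (((k.factorial : ℝ)⁻¹) • (t • N) ^ k))
      = ∑' k : ℕ, (((k.factorial : ℂ)⁻¹) * ((t : ℂ) * μ) ^ k) • w := by
        exact tsum_congr h2
    _ = (∑' k : ℕ, ((k.factorial : ℂ)⁻¹) * ((t : ℂ) * μ) ^ k) • w := h3.tsum_smul_const w
    _ = Complex.exp (t * μ) • w := by
        congr 1
        rw [Complex.exp_eq_exp_ℂ, exp_eq_tsum ℂ]
        simp [smul_eq_mul]

lemma eq_zero_of_exp_bdd {μ : ℂ} (hμ : μ.re ≠ 0) {w : Fin m → ℂ} {c : ℝ}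
    (hb : ∀ t : ℝ, ‖Complex.exp ((t : ℂ) * μ) • w‖ ≤ c) : w = 0 := by
  by_contra hw
  have hw' : 0 < ‖w‖ := norm_pos_iff.mpr hw
  have key : ∀ t : ℝ, Real.exp (t * μ.re) * ‖w‖ ≤ c := by
    intro t
    have := hb t
    rwa [norm_smul, Complex.norm_exp,
      show ((t : ℂ) * μ).re = t * μ.re by simp [Complex.mul_re]] at this
  have hc : ‖w‖ ≤ c := by
    have := key 0
    rwa [zero_mul, Real.exp_zero, one_mul] at this
  have hcpos : 0 < c := lt_of_lt_of_le hw' hc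
  set t₀ : ℝ := (Real.log (c / ‖w‖) + 1) / μ.re with ht₀
  have h1 : t₀ * μ.re = Real.log (c / ‖w‖) + 1 := div_mul_cancel₀ _ hμ
  have h2 := key t₀
  rw [h1] at h2
  have h3 : Real.exp (Real.log (c / ‖w‖) + 1) = (c / ‖w‖) * Real.exp 1 := by
    rw [Real.exp_add, Real.exp_log (by positivity)]
  rw [h3] at h2
  have h4 : c / ‖w‖ * Real.exp 1 * ‖w‖ = c * Real.exp 1 := by field_simp
  rw [h4] at h2
  nlinarith [Real.exp_one_gt_d9]

lemma bddW_exp_smul_mem {N : Matrix (Fin n) (Fin n) ℂ} {C : Matrix (Fin m) (Fin n) ℂ}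
    {x : Fin n → ℂ} (hx : x ∈ bddW N C) (s : ℝ) : exp (s • N) *ᵥ x ∈ bddW N C := by
  letI : NormedRing (Matrix (Fin n) (Fin n) ℂ) := Matrix.linftyOpNormedRing
  letI : NormedAlgebra ℝ (Matrix (Fin n) (Fin n) ℂ) := Matrix.linftyOpNormedAlgebra
  obtain ⟨c, hc⟩ := hx
  refine ⟨c, fun t => ?_⟩
  have hcom : Commute (t • N) (s • N) := ((Commute.refl N).smul_left t).smul_right s
  have e : exp (t • N) *ᵥ (exp (s • N) *ᵥ x) = exp ((t + s) • N) *ᵥ x := by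
    rw [Matrix.mulVec_mulVec, ← Matrix.exp_add_of_commute _ _ hcom, add_smul]
  rw [e]
  exact hc (t + s)

lemma bddW_mulVec_mem {N : Matrix (Fin n) (Fin n) ℂ} {C : Matrix (Fin m) (Fin n) ℂ}
    {x : Fin n → ℂ} (hx : x ∈ bddW N C) : N *ᵥ x ∈ bddW N C := by
  letI : NormedRing (Matrix (Fin n) (Fin n) ℂ) := Matrix.linftyOpNormedRing
  letI : NormedAlgebra ℝ (Matrix (Fin n) (Fin n) ℂ) := Matrix.linftyOpNormedAlgebra
  have hcl : IsClosed ((bddW N C : Submodule ℂ (Fin n → ℂ)) : Set (Fin n → ℂ)) :=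
    Submodule.closed_of_finiteDimensional _
  -- the function t ↦ exp(t • N) *ᵥ x has derivative N *ᵥ x at 0
  have hD : HasDerivAt (fun t : ℝ => obsL (1 : Matrix (Fin n) (Fin n) ℂ) x (exp (t • N)))
      (obsL 1 x (N * exp ((0:ℝ) • N))) 0 :=
    (obsL 1 x).hasFDerivAt.comp_hasDerivAt 0 (hasDerivAt_exp_smul_const' N (0:ℝ))
  have hD' : HasDerivAt (fun t : ℝ => exp (t • N) *ᵥ x) (N *ᵥ x) 0 := by
    have e1 : (fun t : ℝ => obsL (1 : Matrix (Fin n) (Fin n) ℂ) x (exp (t • N)))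
        = fun t : ℝ => exp (t • N) *ᵥ x := by
      funext t; rw [obsL_apply, Matrix.one_mulVec]
    have e2 : obsL (1 : Matrix (Fin n) (Fin n) ℂ) x (N * exp ((0:ℝ) • N)) = N *ᵥ x := by
      rw [obsL_apply, zero_smul, exp_zero, mul_one, Matrix.one_mulVec]
    rw [e1, e2] at hD
    exact hD
  have hslope := hasDerivAt_iff_tendsto_slope.mp hD'
  refine hcl.mem_of_tendsto hslope ?_
  filter_upwards [self_mem_nhdsWithin] with h (hh : h ≠ 0)
  have : slope (fun t : ℝ => exp (t • N) *ᵥ x) 0 h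
      = (h - 0)⁻¹ • (exp (h • N) *ᵥ x - exp ((0:ℝ) • N) *ᵥ x) := rfl
  rw [this]
  exact Submodule.smul_of_tower_mem _ _
    (Submodule.sub_mem _ (bddW_exp_smul_mem hx h) (bddW_exp_smul_mem hx 0))

lemma unobs_mulVec_mem {N : Matrix (Fin n) (Fin n) ℂ} {C : Matrix (Fin m) (Fin n) ℂ}
    {x : Fin n → ℂ} (hx : x ∈ unobs N C) : N *ᵥ x ∈ unobs N C := by
  intro k
  have := hx (k + 1)
  rwa [pow_succ, ← Matrix.mulVec_mulVec] at this

lemma core {N : Matrix (Fin n) (Fin n) ℂ} {C : Matrix (Fin m) (Fin n) ℂ}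
    (hN : ∀ μ ∈ spectrum ℂ N, μ.re ≠ 0) : bddW N C ≤ unobs N C := by
  by_contra hle
  obtain ⟨x₀, hx₀W, hx₀U⟩ := SetLike.not_le_iff_exists.mp hle
  set W := bddW N C with hWdef
  set U := unobs N C with hUdef
  set UW : Submodule ℂ W := U.comap W.subtype with hUWdef
  have hWinv : ∀ x ∈ W, Matrix.mulVecLin N x ∈ W := fun x hx => bddW_mulVec_mem hx
  set eW : W →ₗ[ℂ] W := (Matrix.mulVecLin N).restrict hWinv with heWdef
  have heUW : UW ≤ UW.comap eW := by
    intro y hy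
    simp only [Submodule.mem_comap, hUWdef, Submodule.coe_subtype] at hy ⊢
    have : ((eW y : W) : Fin n → ℂ) = N *ᵥ (y : Fin n → ℂ) := by
      simp [heWdef, LinearMap.restrict_apply, Matrix.mulVecLin_apply]
    rw [this]
    exact unobs_mulVec_mem hy
  set ebar : (W ⧸ UW) →ₗ[ℂ] (W ⧸ UW) := UW.mapQ UW eW heUW with hebar
  haveI hQnt : Nontrivial (W ⧸ UW) := by
    refine ⟨Submodule.Quotient.mk ⟨x₀, hx₀W⟩, 0, fun h => hx₀U ?_⟩
    have := (Submodule.Quotient.mk_eq_zero UW).mp h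
    simpa [hUWdef] using this
  obtain ⟨μ, hμ⟩ := Module.End.exists_eigenvalue ebar
  obtain ⟨vb, hvb⟩ := hμ.exists_hasEigenvector
  obtain ⟨w, hw⟩ := Submodule.Quotient.mk_surjective UW vb
  set v : Fin n → ℂ := (w : Fin n → ℂ) with hvdef
  have hvW : v ∈ W := w.2
  have hvU : v ∉ U := by
    intro h
    exact hvb.2 (by rw [← hw]; exact (Submodule.Quotient.mk_eq_zero UW).mpr (by simpa [hUWdef] using h))
  have hNv : N *ᵥ v - μ • v ∈ U := by
    have h1 : ebar (Submodule.Quotient.mk w) = μ • Submodule.Quotient.mk w := by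
      rw [hw]; exact hvb.apply_eq_smul
    rw [Submodule.mapQ_apply, ← Submodule.Quotient.mk_smul, Submodule.Quotient.eq] at h1
    have h2 : ((eW w - μ • w : W) : Fin n → ℂ) ∈ U := by simpa [hUWdef] using h1
    have h3 : ((eW w - μ • w : W) : Fin n → ℂ) = N *ᵥ v - μ • v := by
      simp [heWdef, LinearMap.restrict_apply, Matrix.mulVecLin_apply, hvdef]
    rwa [h3] at h2
  -- μ is in the spectrum of N
  have hμspec : μ ∈ spectrum ℂ N := by
    by_contra hins
    have hMunit : IsUnit (algebraMap ℂ (Matrix (Fin n) (Fin n) ℂ) μ - N) :=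
      spectrum.notMem_iff.mp hins
    set M₀ : Matrix (Fin n) (Fin n) ℂ := algebraMap ℂ (Matrix (Fin n) (Fin n) ℂ) μ - N with hM₀def
    have hM₀ : ∀ y : Fin n → ℂ, M₀ *ᵥ y = μ • y - N *ᵥ y := by
      intro y
      rw [hM₀def, Matrix.sub_mulVec, Algebra.algebraMap_eq_smul_one,
        Matrix.smul_mulVec, Matrix.one_mulVec]
    have hdet : IsUnit M₀.det := (Matrix.isUnit_iff_isUnit_det M₀).mp hMunit
    have hinj : Function.Injective (Matrix.mulVecLin M₀) := by
      intro a b hab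
      have h2 : M₀⁻¹ *ᵥ (M₀ *ᵥ a) = M₀⁻¹ *ᵥ (M₀ *ᵥ b) := congrArg (fun y => M₀⁻¹ *ᵥ y) hab
      simpa [Matrix.mulVec_mulVec, Matrix.nonsing_inv_mul M₀ hdet, Matrix.one_mulVec] using h2
    have hTWmem : ∀ x ∈ W, Matrix.mulVecLin M₀ x ∈ W := by
      intro x hx
      have : Matrix.mulVecLin M₀ x = μ • x - N *ᵥ x := hM₀ x
      rw [this]
      exact W.sub_mem (W.smul_mem μ hx) (bddW_mulVec_mem hx)
    set TW : W →ₗ[ℂ] W := (Matrix.mulVecLin M₀).restrict hTWmem with hTWdef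
    have hTWinj : Function.Injective TW := by
      intro a b hab
      apply Subtype.ext
      apply hinj
      have := congrArg (fun y : W => (y : Fin n → ℂ)) hab
      simpa [hTWdef, LinearMap.restrict_apply] using this
    have hTWsurj : Function.Surjective TW := LinearMap.injective_iff_surjective.mp hTWinj
    have hTU : UW ≤ UW.comap TW := by
      intro y hy
      simp only [Submodule.mem_comap, hUWdef, Submodule.coe_subtype] at hy ⊢
      have h4 : ((TW y : W) : Fin n → ℂ) = μ • (y : Fin n → ℂ) - N *ᵥ (y : Fin n → ℂ) := by
        rw [hTWdef]
        simp [LinearMap.restrict_apply, Matrix.mulVecLin_apply, hM₀ _]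
      rw [h4]
      exact U.sub_mem (U.smul_mem μ hy) (unobs_mulVec_mem hy)
    set Tbar : (W ⧸ UW) →ₗ[ℂ] (W ⧸ UW) := UW.mapQ UW TW hTU with hTbar
    have hTbarsurj : Function.Surjective Tbar := by
      intro q
      obtain ⟨y, rfl⟩ := Submodule.Quotient.mk_surjective UW q
      obtain ⟨z, hz⟩ := hTWsurj y
      exact ⟨Submodule.Quotient.mk z, by rw [hTbar, Submodule.mapQ_apply, hz]⟩
    have hTbarinj : Function.Injective Tbar := LinearMap.injective_iff_surjective.mpr hTbarsurj
    have hTv : Tbar vb = 0 := by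
      rw [← hw, hTbar, Submodule.mapQ_apply]
      rw [Submodule.Quotient.mk_eq_zero]
      have h5 : ((TW w : W) : Fin n → ℂ) = -(N *ᵥ v - μ • v) := by
        rw [hTWdef]
        simp only [LinearMap.restrict_apply, Matrix.mulVecLin_apply, hM₀ _]
        rw [neg_sub]
      have h6 : ((TW w : W) : Fin n → ℂ) ∈ U := h5 ▸ U.neg_mem hNv
      simpa [hUWdef] using h6
    have : vb = 0 := hTbarinj (by rw [hTv, map_zero])
    exact hvb.2 this
  have hre : μ.re ≠ 0 := hN μ hμspec
  -- powers
  have hpow : ∀ k : ℕ, ∃ z ∈ U, (N ^ k) *ᵥ v = μ ^ k • v + z := by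
    intro k
    induction k with
    | zero => exact ⟨0, U.zero_mem, by simp [Matrix.one_mulVec]⟩
    | succ k ih =>
      obtain ⟨z, hz, hzeq⟩ := ih
      refine ⟨μ ^ k • (N *ᵥ v - μ • v) + N *ᵥ z,
        U.add_mem (U.smul_mem _ hNv) (unobs_mulVec_mem hz), ?_⟩
      rw [pow_succ', ← Matrix.mulVec_mulVec, hzeq, Matrix.mulVec_add, Matrix.mulVec_smul,
        pow_succ]
      rw [smul_sub]
      module
  have hCk : ∀ k : ℕ, C *ᵥ ((N ^ k) *ᵥ v) = μ ^ k • (C *ᵥ v) := by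
    intro k
    obtain ⟨z, hz, he⟩ := hpow k
    have hz0 : C *ᵥ z = 0 := by simpa [Matrix.one_mulVec] using hz 0
    rw [he, Matrix.mulVec_add, Matrix.mulVec_smul, hz0, add_zero]
  obtain ⟨c, hc⟩ := hvW
  have hCv : C *ᵥ v = 0 := by
    refine eq_zero_of_exp_bdd hre (c := c) (fun t => ?_)
    rw [← obs_exp hCk t]
    exact hc t
  exact hvU (fun k => by rw [hCk k, hCv, smul_zero])

/-- Complexification of a real vector. -/
def cvec {k : ℕ} (p : Fin k → ℝ) : Fin k → ℂ := fun i => (p i : ℂ)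

lemma abs_le_eNorm' (v : Fin m → ℝ) (i : Fin m) : |v i| ≤ Real.sqrt (∑ j, v j ^ 2) := by
  rw [← Real.sqrt_sq_eq_abs]
  exact Real.sqrt_le_sqrt (Finset.single_le_sum (f := fun j => v j ^ 2)
    (fun j _ => sq_nonneg _) (Finset.mem_univ i))

lemma helper1 (p : Fin n → ℝ) (X : Matrix (Fin n) (Fin n) ℝ) (B : Matrix (Fin n) (Fin m) ℝ) :
    cvec (p ᵥ* (X * B)) =
      (B.map (Complex.ofReal ·))ᵀ *ᵥ ((X.map (Complex.ofReal ·))ᵀ *ᵥ cvec p) := by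
  funext i
  simp only [cvec, Matrix.mulVec, Matrix.vecMul, dotProduct, Matrix.mul_apply,
    Matrix.transpose_apply, Matrix.map_apply]
  push_cast
  simp only [Finset.mul_sum]
  rw [Finset.sum_comm]
  refine Finset.sum_congr rfl fun l _ => ?_
  refine Finset.sum_congr rfl fun j _ => ?_
  ring

lemma map_smul_ofReal (t : ℝ) (A : Matrix (Fin n) (Fin n) ℝ) :
    ((t • A).map (Complex.ofReal ·)) = t • (A.map (Complex.ofReal ·)) := by
  funext i j
  simp [Matrix.map_apply, Matrix.smul_apply, Complex.real_smul]

lemma map_mexp (A : Matrix (Fin n) (Fin n) ℝ) :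
    (mexp A).map (Complex.ofReal ·) = exp (A.map (Complex.ofReal ·)) := by
  letI : NormedRing (Matrix (Fin n) (Fin n) ℝ) := Matrix.linftyOpNormedRing
  letI : NormedAlgebra ℝ (Matrix (Fin n) (Fin n) ℝ) := Matrix.linftyOpNormedAlgebra
  letI : NormedRing (Matrix (Fin n) (Fin n) ℂ) := Matrix.linftyOpNormedRing
  letI : NormedAlgebra ℝ (Matrix (Fin n) (Fin n) ℂ) := Matrix.linftyOpNormedAlgebra
  have hcont : Continuous (Complex.ofRealHom.mapMatrix :
      Matrix (Fin n) (Fin n) ℝ →+* Matrix (Fin n) (Fin n) ℂ) :=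
    Continuous.matrix_map continuous_id Complex.continuous_ofReal
  letI : NormedAlgebra ℚ (Matrix (Fin n) (Fin n) ℝ) := NormedAlgebra.restrictScalars ℚ ℝ _
  exact map_exp (Complex.ofRealHom.mapMatrix :
    Matrix (Fin n) (Fin n) ℝ →+* Matrix (Fin n) (Fin n) ℂ) hcont A

lemma map_pow_ofReal (A : Matrix (Fin n) (Fin n) ℝ) (k : ℕ) :
    ((A ^ k).map (Complex.ofReal ·)) = (A.map (Complex.ofReal ·)) ^ k := by
  have : ((A ^ k).map (Complex.ofReal ·)) = Complex.ofRealHom.mapMatrix (A ^ k) := rfl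
  rw [this, map_pow]
  rfl

lemma keyglue (A : Matrix (Fin n) (Fin n) ℝ) (B : Matrix (Fin n) (Fin m) ℝ)
    (hA : Hyperbolic A) (p : Fin n → ℝ) (c : ℝ)
    (hb : ∀ t : ℝ, Real.sqrt (∑ i, (p ᵥ* (mexp (t • A) * B)) i ^ 2) ≤ c) :
    ∀ k : ℕ, p ᵥ* (A ^ k * B) = 0 := by
  set Ac := A.map (Complex.ofReal ·) with hAc
  set Bc := B.map (Complex.ofReal ·) with hBc
  have hspecT : ∀ μ ∈ spectrum ℂ Acᵀ, μ.re ≠ 0 := by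
    intro μ hμ
    refine hA μ ?_
    rw [spectrum.mem_iff] at hμ ⊢
    intro hu
    apply hμ
    have h1 : algebraMap ℂ (Matrix (Fin n) (Fin n) ℂ) μ - Acᵀ
        = (algebraMap ℂ (Matrix (Fin n) (Fin n) ℂ) μ - Ac)ᵀ := by
      rw [Matrix.transpose_sub, Algebra.algebraMap_eq_smul_one,
        Matrix.transpose_smul, Matrix.transpose_one]

    rw [h1, Matrix.isUnit_iff_isUnit_det, Matrix.det_transpose,
      ← Matrix.isUnit_iff_isUnit_det]
    exact hu
  have hmem : cvec p ∈ bddW Acᵀ Bcᵀ := by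
    refine ⟨max c 0, fun t => ?_⟩
    have he : Bcᵀ *ᵥ (exp (t • Acᵀ) *ᵥ cvec p) = cvec (p ᵥ* (mexp (t • A) * B)) := by
      rw [helper1 p (mexp (t • A)) B]
      rw [map_mexp, map_smul_ofReal, ← Matrix.transpose_smul, Matrix.exp_transpose]
    rw [he]
    rw [pi_norm_le_iff_of_nonneg (le_max_right c 0)]
    intro i
    have h2 : ‖(cvec (p ᵥ* (mexp (t • A) * B))) i‖ = |(p ᵥ* (mexp (t • A) * B)) i| := by
      simp [cvec]
    rw [h2]
    exact le_trans (abs_le_eNorm' _ i) (le_trans (hb t) (le_max_left c 0))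
  have h0 := core hspecT hmem
  intro k
  have h1 : Bcᵀ *ᵥ ((Acᵀ ^ k) *ᵥ cvec p) = 0 := h0 k
  have h2 : cvec (p ᵥ* (A ^ k * B)) = 0 := by
    rw [helper1 p (A ^ k) B, ← hBc, map_pow_ofReal, ← hAc, Matrix.transpose_pow]
    exact h1
  funext i
  have h3 := congrFun h2 i
  simpa [cvec, Complex.ofReal_eq_zero] using h3

lemma p_eq_zero_of_unobs (A : Matrix (Fin n) (Fin n) ℝ) (B : Matrix (Fin n) (Fin m) ℝ)
    (hK : Submodule.span ℝ {x : Fin n → ℝ | ∃ i < n, ∃ v : Fin m → ℝ, x = (A ^ i) *ᵥ (B *ᵥ v)} = ⊤)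
    (p : Fin n → ℝ) (hz : ∀ k : ℕ, p ᵥ* (A ^ k * B) = 0) : p = 0 := by
  set lm : (Fin n → ℝ) →ₗ[ℝ] ℝ :=
    { toFun := fun x => p ⬝ᵥ x
      map_add' := by intro a b; simp [dotProduct_add]
      map_smul' := by intro r x; simp [dotProduct_smul] } with hlm
  have hsub : {x : Fin n → ℝ | ∃ i < n, ∃ v : Fin m → ℝ, x = (A ^ i) *ᵥ (B *ᵥ v)}
      ⊆ (LinearMap.ker lm : Set (Fin n → ℝ)) := by
    rintro x ⟨i, hi, v, rfl⟩
    have : p ⬝ᵥ ((A ^ i) *ᵥ (B *ᵥ v)) = 0 := by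
      rw [Matrix.dotProduct_mulVec, Matrix.dotProduct_mulVec, Matrix.vecMul_vecMul,
        hz i, zero_dotProduct]
    simpa [hlm] using this
  have hker : Submodule.span ℝ {x : Fin n → ℝ | ∃ i < n, ∃ v : Fin m → ℝ,
      x = (A ^ i) *ᵥ (B *ᵥ v)} ≤ LinearMap.ker lm := Submodule.span_le.mpr hsub
  rw [hK, top_le_iff] at hker
  have hp : lm p = 0 := by rw [← LinearMap.mem_ker, hker]; trivial
  have : p ⬝ᵥ p = 0 := hp
  exact dotProduct_self_eq_zero.mp this

end Aux

theorem stmt8 {n m : ℕ} (A : Matrix (Fin n) (Fin n) ℝ) (B : Matrix (Fin n) (Fin m) ℝ)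
    (hA : Hyperbolic A) (hK : Kalman A B) (p : Fin n → ℝ) (hp : p ≠ 0) :
    (¬ ∀ t : ℝ, eNorm (p ᵥ* (mexp (t • A) * B)) = 1) ∧
    (¬ ∃ c : ℝ, ∀ t : ℝ, eNorm (p ᵥ* (mexp (t • A) * B)) = c) := by
  have notconst : ¬ ∃ c : ℝ, ∀ t : ℝ, eNorm (p ᵥ* (mexp (t • A) * B)) = c := by
    rintro ⟨c, hc⟩
    have hb : ∀ t : ℝ, Real.sqrt (∑ i, (p ᵥ* (mexp (t • A) * B)) i ^ 2) ≤ c := fun t =>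
      le_of_eq (hc t)
    exact hp (p_eq_zero_of_unobs A B hK p (keyglue A B hA p c hb))
  exact ⟨fun h => notconst ⟨1, h⟩, notconst⟩
end

section
/- For a hyperbolic A with Kalman condition, for each s > 0 the set {ξ ∈ (ℝ^n)* : |ξ e^{-τA} B| ≤ 1 for all τ ∈ [0,s]} is bounded. -/
open MeasureTheory Set Filter Matrix

section auxlemmas

open NormedSpace

attribute [local instance] Matrix.linftyOpNormedRing Matrix.linftyOpNormedAlgebra

lemma abs_le_eNorm {m : ℕ} (x : Fin m → ℝ) (j : Fin m) : |x j| ≤ eNorm x := by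
  rw [eNorm, ← Real.sqrt_sq_eq_abs]
  exact Real.sqrt_le_sqrt (Finset.single_le_sum (fun i _ => sq_nonneg (x i))
    (Finset.mem_univ j))

lemma vanish_eq_zero {n m : ℕ} (A : Matrix (Fin n) (Fin n) ℝ) (B : Matrix (Fin n) (Fin m) ℝ)
    (hK : Kalman A B) (s : ℝ) (hs : 0 < s) (η : Fin n → ℝ)
    (hv : ∀ τ ∈ Icc (0:ℝ) s, η ᵥ* (mexp (-(τ • A)) * B) = 0) : η = 0 := by
  have key : ∀ (v : Fin m → ℝ) (k : ℕ), ∀ τ ∈ Ioo (0:ℝ) s,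
      η ⬝ᵥ (mexp (-(τ • A)) *ᵥ ((A ^ k) *ᵥ (B *ᵥ v))) = 0 := by
    intro v
    set g : ℕ → ℝ → ℝ :=
      fun k τ => η ⬝ᵥ (mexp (-(τ • A)) *ᵥ ((A ^ k) *ᵥ (B *ᵥ v))) with hg
    have hderiv : ∀ (k : ℕ) (τ : ℝ), HasDerivAt (g k) (-(g (k+1) τ)) τ := by
      intro k τ
      let L : Matrix (Fin n) (Fin n) ℝ →ₗ[ℝ] ℝ :=
        { toFun := fun M => η ⬝ᵥ (M *ᵥ ((A ^ k) *ᵥ (B *ᵥ v)))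
          map_add' := fun x y => by
            simp [Matrix.add_mulVec, Matrix.add_mul, dotProduct_add]
          map_smul' := fun c x => by
            simp [Matrix.smul_mulVec, Matrix.smul_mul, dotProduct_smul] }
      have hE : HasDerivAt (fun τ : ℝ => NormedSpace.exp (τ • (-A)))
          (NormedSpace.exp (τ • (-A)) * (-A)) τ := hasDerivAt_exp_smul_const (-A) τ
      have hcomp := (L.toContinuousLinearMap.hasFDerivAt.comp_hasDerivAt τ hE)
      have hfun : (fun τ : ℝ => L.toContinuousLinearMap (NormedSpace.exp (τ • (-A)))) = g k := by
        funext τ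
        simp only [LinearMap.coe_toContinuousLinearMap', LinearMap.coe_mk, AddHom.coe_mk, L,
          hg, mexp, smul_neg]
      have hval : L.toContinuousLinearMap (NormedSpace.exp (τ • (-A)) * (-A)) = -(g (k+1) τ) := by
        simp only [LinearMap.coe_toContinuousLinearMap', LinearMap.coe_mk, AddHom.coe_mk, L,
          hg, mexp, smul_neg]
        simp [pow_succ', Matrix.mulVec_mulVec, Matrix.neg_mul, Matrix.mul_neg,
          Matrix.neg_mulVec, Matrix.mulVec_neg, dotProduct_neg, Matrix.mul_assoc]
      exact HasDerivAt.congr_of_eventuallyEq (hval ▸ hcomp)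
        (Filter.Eventually.of_forall fun y => (congrFun hfun y).symm)
    intro k
    induction k with
    | zero =>
      intro τ hτ
      have h0 := hv τ ⟨le_of_lt hτ.1, le_of_lt hτ.2⟩
      simp only [hg, pow_zero, Matrix.one_mulVec]
      rw [Matrix.mulVec_mulVec, Matrix.dotProduct_mulVec, h0, zero_dotProduct]
    | succ k ih =>
      intro τ hτ
      have hev : g k =ᶠ[nhds τ] fun _ => 0 := by
        filter_upwards [Ioo_mem_nhds hτ.1 hτ.2] with x hx using ih x hx
      have h1 : HasDerivAt (g k) 0 τ :=
        (hasDerivAt_const τ (0:ℝ)).congr_of_eventuallyEq hev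
      have h2 := (hderiv k τ).unique h1
      exact neg_eq_zero.mp h2
  -- evaluate at τ₀ = s/2
  have hmem : s / 2 ∈ Ioo (0:ℝ) s := ⟨by linarith, by linarith⟩
  set ζ : Fin n → ℝ := η ᵥ* mexp (-((s/2) • A)) with hζdef
  have hζ : ∀ (k : ℕ) (v : Fin m → ℝ), ζ ⬝ᵥ ((A ^ k) *ᵥ (B *ᵥ v)) = 0 := by
    intro k v
    have h := key v k (s/2) hmem
    rwa [Matrix.dotProduct_mulVec] at h
  have hall : ∀ x : Fin n → ℝ, ζ ⬝ᵥ x = 0 := by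
    intro x
    have hx : x ∈ Submodule.span ℝ
        {x : Fin n → ℝ | ∃ i < n, ∃ v : Fin m → ℝ, x = (A ^ i) *ᵥ (B *ᵥ v)} := by
      rw [hK]; exact Submodule.mem_top
    refine Submodule.span_induction ?_ ?_ ?_ ?_ hx
    · rintro y ⟨i, -, v, rfl⟩
      exact hζ i v
    · exact dotProduct_zero ζ
    · intro a b _ _ ha hb
      rw [dotProduct_add, ha, hb, add_zero]
    · intro c a _ ha
      rw [dotProduct_smul, ha, smul_zero]
  have hζ0 : ζ = 0 := by
    funext i
    have := hall (Pi.single i 1)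
    rwa [dotProduct_single, mul_one] at this
  have hinv : mexp (-((s/2) • A)) * mexp ((s/2) • A) = 1 := by
    rw [mexp, mexp, ← Matrix.exp_add_of_commute (m := Fin n) (𝔸 := ℝ) _ _ (Commute.neg_left (Commute.refl _)),
      neg_add_cancel, NormedSpace.exp_zero]
  calc η = η ᵥ* (1 : Matrix (Fin n) (Fin n) ℝ) := (Matrix.vecMul_one η).symm
    _ = (η ᵥ* mexp (-((s/2) • A))) ᵥ* mexp ((s/2) • A) := by
        rw [Matrix.vecMul_vecMul, hinv]
    _ = 0 := by rw [← hζdef, hζ0, Matrix.zero_vecMul]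

end auxlemmas

theorem stmt15 {n m : ℕ} (A : Matrix (Fin n) (Fin n) ℝ) (B : Matrix (Fin n) (Fin m) ℝ)
    (hK : Kalman A B) (s : ℝ) (hs : 0 < s) :
    Bornology.IsBounded
      {ξ : Fin n → ℝ | ∀ τ ∈ Icc (0:ℝ) s, eNorm (ξ ᵥ* (mexp (-(τ • A)) * B)) ≤ 1} := by
  set S := {ξ : Fin n → ℝ | ∀ τ ∈ Icc (0:ℝ) s, eNorm (ξ ᵥ* (mexp (-(τ • A)) * B)) ≤ 1} with hS
  by_contra hB
  have hseq : ∀ k : ℕ, ∃ ξ, ξ ∈ S ∧ (k : ℝ) < ‖ξ‖ := by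
    intro k
    by_contra h
    push_neg at h
    exact hB (isBounded_iff_forall_norm_le.2 ⟨k, fun ξ hξ => h ξ hξ⟩)
  choose ξ hmem hnorm using hseq
  have hpos : ∀ k, 0 < ‖ξ k‖ := fun k => lt_of_le_of_lt (Nat.cast_nonneg k) (hnorm k)
  set η : ℕ → Fin n → ℝ := fun k => ‖ξ k‖⁻¹ • ξ k with hη
  have hsph : ∀ k, η k ∈ Metric.sphere (0 : Fin n → ℝ) 1 := by
    intro k
    rw [mem_sphere_zero_iff_norm, hη]
    rw [norm_smul, norm_inv, norm_norm, inv_mul_cancel₀ (hpos k).ne']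
  obtain ⟨ηl, hηl, φ, hφ, hconv⟩ :=
    (isCompact_sphere (0 : Fin n → ℝ) 1).tendsto_subseq hsph
  -- ηl kills e^{-τA}B on [0,s]
  have hvan : ∀ τ ∈ Icc (0:ℝ) s, ηl ᵥ* (mexp (-(τ • A)) * B) = 0 := by
    intro τ hτ
    set M := mexp (-(τ • A)) * B with hM
    set Lc : (Fin n → ℝ) →L[ℝ] (Fin m → ℝ) := (Matrix.vecMulLinear M).toContinuousLinearMap
    have h1 : Tendsto (fun k => Lc (η (φ k))) atTop (nhds (Lc ηl)) :=
      (Lc.continuous.tendsto ηl).comp hconv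
    have hbound : ∀ k, ‖Lc (η (φ k))‖ ≤ ‖ξ (φ k)‖⁻¹ := by
      intro k
      have hLη : Lc (η (φ k)) = ‖ξ (φ k)‖⁻¹ • Lc (ξ (φ k)) := by
        rw [hη]; exact Lc.map_smul _ _
      rw [hLη, norm_smul, norm_inv, norm_norm]
      have hle1 : ‖Lc (ξ (φ k))‖ ≤ 1 := by
        have hent : ∀ j, |(ξ (φ k) ᵥ* M) j| ≤ 1 := by
          intro j
          exact le_trans (abs_le_eNorm _ j) (hmem (φ k) τ hτ)
        refine (pi_norm_le_iff_of_nonneg zero_le_one).2 ?_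
        intro j
        rw [Real.norm_eq_abs]
        exact hent j
      calc ‖ξ (φ k)‖⁻¹ * ‖Lc (ξ (φ k))‖ ≤ ‖ξ (φ k)‖⁻¹ * 1 := by
            exact mul_le_mul_of_nonneg_left hle1 (inv_nonneg.2 (hpos _).le)
        _ = ‖ξ (φ k)‖⁻¹ := mul_one _
    have hinv0 : Tendsto (fun k => ‖ξ (φ k)‖⁻¹) atTop (nhds 0) := by
      refine Tendsto.inv_tendsto_atTop ?_
      refine tendsto_atTop_mono (fun k => ?_) tendsto_natCast_atTop_atTop
      calc (k : ℝ) ≤ (φ k : ℝ) := Nat.cast_le.2 (hφ.le_apply)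
        _ ≤ ‖ξ (φ k)‖ := (hnorm (φ k)).le
    have h2 : Tendsto (fun k => Lc (η (φ k))) atTop (nhds 0) :=
      squeeze_zero_norm hbound hinv0
    have := tendsto_nhds_unique h1 h2
    exact this
  have : ηl = 0 := vanish_eq_zero A B hK s hs ηl hvan
  rw [this, mem_sphere_zero_iff_norm, norm_zero] at hηl
  exact one_ne_zero hηl.symm
end

section
/- For the free particle (double integrator) with |u| ≤ 1, the infinite-horizon optimal stabilization cost is μ_∞(x₀) = inf_{T>0} μ_T(x₀) = |x₀²| for every x₀ = (x₀¹, x₀²) ∈ ℝ². -/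
open MeasureTheory Set Filter

private lemma myIntConst (a b C : ℝ) (h : a ≤ b) : ∫ _t in Ioc a b, C = C * (b - a) := by
  rw [setIntegral_const, measureReal_def, Real.volume_Ioc, ENNReal.toReal_ofReal (by linarith), smul_eq_mul]; ring

private lemma myIntLin (a b C : ℝ) (h : a ≤ b) : ∫ t in Ioc a b, t * C = (b^2 - a^2)/2 * C := by
  rw [← intervalIntegral.integral_of_le h, intervalIntegral.integral_mul_const, integral_id]

private lemma mySplit (α β T : ℝ) (h1 : (0:ℝ) ≤ α) (h2 : α ≤ β) (h3 : β ≤ T)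
    (f g₁ g₂ g₃ : ℝ → ℝ)
    (e1 : EqOn f g₁ (Ioc 0 α)) (e2 : EqOn f g₂ (Ioc α β)) (e3 : EqOn f g₃ (Ioc β T))
    (i1 : IntegrableOn g₁ (Ioc 0 α)) (i2 : IntegrableOn g₂ (Ioc α β))
    (i3 : IntegrableOn g₃ (Ioc β T)) :
    ∫ t in Ioc 0 T, f t
      = (∫ t in Ioc 0 α, g₁ t) + (∫ t in Ioc α β, g₂ t) + (∫ t in Ioc β T, g₃ t) := by
  have i1' : IntegrableOn f (Ioc 0 α) := i1.congr_fun e1.symm measurableSet_Ioc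
  have i2' : IntegrableOn f (Ioc α β) := i2.congr_fun e2.symm measurableSet_Ioc
  have i3' : IntegrableOn f (Ioc β T) := i3.congr_fun e3.symm measurableSet_Ioc
  have key : ∫ t in Ioc 0 T, f t
      = (∫ t in Ioc 0 α, f t) + (∫ t in Ioc α β, f t) + (∫ t in Ioc β T, f t) := by
    rw [← Ioc_union_Ioc_eq_Ioc h1 (h2.trans h3),
      setIntegral_union (Ioc_disjoint_Ioc_of_le le_rfl) measurableSet_Ioc i1'
        ((i2'.union i3').congr_set_ae (by rw [Ioc_union_Ioc_eq_Ioc h2 h3]; exact EventuallyEq.rfl) ),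
      ← Ioc_union_Ioc_eq_Ioc h2 h3,
      setIntegral_union (Ioc_disjoint_Ioc_of_le le_rfl) measurableSet_Ioc i2' i3']
    ring
  rw [key, setIntegral_congr_fun measurableSet_Ioc e1, setIntegral_congr_fun measurableSet_Ioc e2,
    setIntegral_congr_fun measurableSet_Ioc e3]

private lemma construct (a b ε : ℝ) (hε : 0 < ε) :
    ∃ T : ℝ, 0 < T ∧ ∃ u : ℝ → ℝ, Measurable u ∧ (∀ t, |u t| ≤ 1) ∧
      a = -∫ t in Ioc (0:ℝ) T, u t ∧
      b = ∫ t in Ioc (0:ℝ) T, t * u t ∧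
      (∫ t in Ioc (0:ℝ) T, |u t|) ≤ |a| + ε := by
  set α : ℝ := |a| + 1 with hαdef
  have hα1 : (1:ℝ) ≤ α := by rw [hαdef]; linarith [abs_nonneg a]
  have hα0 : (0:ℝ) < α := by linarith
  set δ : ℝ := min (ε/3) 1 with hδdef
  have hδ0 : 0 < δ := lt_min (by linarith) one_pos
  have hδ1 : δ ≤ 1 := min_le_right _ _
  have hδε : δ ≤ ε/3 := min_le_left _ _
  set N : ℝ := |b + a*α/2| with hNdef
  have hN0 : 0 ≤ N := abs_nonneg _
  set K : ℝ := (N+1)/δ + α with hKdef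
  have hKδ : N + 1 ≤ δ * K := by
    have h1 : δ * ((N+1)/δ) = N + 1 := by field_simp
    have h2 : 0 ≤ δ * α := by positivity
    rw [hKdef, mul_add, h1]
    linarith
  have hKα : α ≤ K := by
    have : 0 ≤ (N+1)/δ := by positivity
    rw [hKdef]; linarith
  have hK0 : 0 < K := lt_of_lt_of_le hα0 hKα
  set T : ℝ := α + K with hTdef
  set β : ℝ := K with hβdef
  set m₂ : ℝ := (b + a*α/2)/K with hm₂def
  set m₁ : ℝ := -a - m₂ with hm₁def
  have hm₂K : m₂ * K = b + a*α/2 := div_mul_cancel₀ _ (ne_of_gt hK0)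
  have hm₂δ : |m₂| ≤ δ := by
    rw [hm₂def, abs_div, abs_of_pos hK0, div_le_iff₀ hK0]
    calc |b + a*α/2| = N := rfl
      _ ≤ δ * K - 1 := by linarith
      _ ≤ δ * K := by linarith
  have hm₁α : |m₁| ≤ α := by
    calc |m₁| = |(-(a + m₂))| := by rw [hm₁def]; ring_nf
      _ = |a + m₂| := abs_neg _
      _ ≤ |a| + |m₂| := abs_add_le _ _
      _ ≤ |a| + 1 := by linarith
  set p : ℝ := m₁ / α with hpdef
  set q : ℝ := m₂ / α with hqdef
  have hpα : p * α = m₁ := div_mul_cancel₀ _ (ne_of_gt hα0)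
  have hqα : q * α = m₂ := div_mul_cancel₀ _ (ne_of_gt hα0)
  have hp1 : |p| ≤ 1 := by
    rw [hpdef, abs_div, abs_of_pos hα0, div_le_one hα0]; exact hm₁α
  have hq1 : |q| ≤ 1 := by
    rw [hqdef, abs_div, abs_of_pos hα0, div_le_one hα0]
    linarith [hm₂δ]
  set u : ℝ → ℝ := fun t => if t ≤ α then p else if T - α < t then q else 0 with hudef
  have hT0 : 0 < T := by rw [hTdef]; linarith
  have hαβ : α ≤ β := hKα
  have hβT : β ≤ T := by rw [hTdef, hβdef]; linarith
  have hTα : T - α = β := by rw [hTdef, hβdef]; ring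
  have hmeas : Measurable u := by
    apply Measurable.ite (measurableSet_le measurable_id measurable_const) measurable_const
    exact Measurable.ite (measurableSet_lt measurable_const measurable_id) measurable_const
      measurable_const
  have hbound : ∀ t, |u t| ≤ 1 := by
    intro t
    rw [hudef]
    by_cases h1 : t ≤ α
    · simpa [h1] using hp1
    · by_cases h2 : T - α < t
      · simpa [h1, h2] using hq1
      · simp [h1, h2]
  -- EqOn facts
  have e1 : ∀ t ∈ Ioc (0:ℝ) α, u t = p := by
    intro t ht; rw [hudef]; simp [ht.2]
  have e2 : ∀ t ∈ Ioc α β, u t = 0 := by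
    intro t ht
    rw [hudef]
    have h1 : ¬ t ≤ α := not_le.2 ht.1
    have h2 : ¬ T - α < t := not_lt.2 (by rw [hTα]; exact ht.2)
    simp [h1, h2]
  have e3 : ∀ t ∈ Ioc β T, u t = q := by
    intro t ht
    rw [hudef]
    have h1 : ¬ t ≤ α := not_le.2 (lt_of_le_of_lt hαβ ht.1)
    have h2 : T - α < t := by rw [hTα]; exact ht.1
    simp [h1, h2]
  have iconst : ∀ (c d C : ℝ), IntegrableOn (fun _ => C) (Ioc c d) (volume : Measure ℝ) :=
    fun c d C => integrableOn_const measure_Ioc_lt_top.ne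
  have ilin : ∀ (c d C : ℝ), IntegrableOn (fun t => t * C) (Ioc c d) (volume : Measure ℝ) :=
    fun c d C => (continuous_id.mul continuous_const).integrableOn_Ioc
  -- integral of u
  have I1 : ∫ t in Ioc (0:ℝ) T, u t = p * α + q * α := by
    rw [mySplit α β T (by linarith) hαβ hβT u (fun _ => p) (fun _ => 0) (fun _ => q)
      e1 e2 e3 (iconst _ _ _) (iconst _ _ _) (iconst _ _ _),
      myIntConst _ _ _ (by linarith), myIntConst _ _ _ hαβ, myIntConst _ _ _ hβT]
    have : T - β = α := by rw [hTdef, hβdef]; ring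
    rw [this]; ring
  -- integral of t * u
  have I2 : ∫ t in Ioc (0:ℝ) T, t * u t
      = (α^2 - 0^2)/2 * p + (β^2 - α^2)/2 * 0 + (T^2 - β^2)/2 * q := by
    rw [mySplit α β T (by linarith) hαβ hβT (fun t => t * u t) (fun t => t * p)
      (fun t => t * 0) (fun t => t * q)
      (fun t ht => by show t * u t = t * p; rw [e1 t ht])
      (fun t ht => by show t * u t = t * 0; rw [e2 t ht])
      (fun t ht => by show t * u t = t * q; rw [e3 t ht])
      (ilin _ _ _) (ilin _ _ _) (ilin _ _ _),
      myIntLin _ _ _ (by linarith), myIntLin _ _ _ hαβ, myIntLin _ _ _ hβT]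
  -- integral of |u|
  have I3 : ∫ t in Ioc (0:ℝ) T, |u t| = |p| * α + |q| * α := by
    rw [mySplit α β T (by linarith) hαβ hβT (fun t => |u t|) (fun _ => |p|)
      (fun _ => (0:ℝ)) (fun _ => |q|)
      (fun t ht => by show |u t| = |p|; rw [e1 t ht])
      (fun t ht => by show |u t| = (0:ℝ); rw [e2 t ht, abs_zero])
      (fun t ht => by show |u t| = |q|; rw [e3 t ht])
      (iconst _ _ _) (iconst _ _ _) (iconst _ _ _),
      myIntConst _ _ _ (by linarith), myIntConst _ _ _ hαβ, myIntConst _ _ _ hβT]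
    have : T - β = α := by rw [hTdef, hβdef]; ring
    rw [this]; ring
  refine ⟨T, hT0, u, hmeas, hbound, ?_, ?_, ?_⟩
  · rw [I1, hpα, hqα, hm₁def]; ring
  · rw [I2]
    have hT2 : (T^2 - β^2)/2 * q = m₂ * α / 2 + m₂ * K := by
      have : T^2 - β^2 = α * (α + 2*K) := by rw [hTdef, hβdef]; ring
      rw [this, hqdef]
      field_simp
    have hA : (α^2 - 0^2)/2 * p = m₁ * α / 2 := by
      rw [hpdef]; field_simp; ring
    rw [hT2, hA, hm₂K, hm₁def]; ring
  · rw [I3]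
    have h1 : |p| * α = |m₁| := by rw [hpdef, abs_div, abs_of_pos hα0]; field_simp
    have h2 : |q| * α = |m₂| := by rw [hqdef, abs_div, abs_of_pos hα0]; field_simp
    rw [h1, h2]
    have : |m₁| ≤ |a| + |m₂| := by
      calc |m₁| = |(-(a + m₂))| := by rw [hm₁def]; ring_nf
        _ = |a + m₂| := abs_neg _
        _ ≤ |a| + |m₂| := abs_add_le _ _
    linarith

theorem stmt16 (x₀ : ℝ × ℝ) :
    sInf {c : ℝ | ∃ T : ℝ, 0 < T ∧ ∃ u : ℝ → ℝ, Measurable u ∧ (∀ t, |u t| ≤ 1) ∧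
      x₀.2 = -∫ t in Ioc (0:ℝ) T, u t ∧
      x₀.1 = ∫ t in Ioc (0:ℝ) T, t * u t ∧
      c = ∫ t in Ioc (0:ℝ) T, |u t|} = |x₀.2| := by
  set S := {c : ℝ | ∃ T : ℝ, 0 < T ∧ ∃ u : ℝ → ℝ, Measurable u ∧ (∀ t, |u t| ≤ 1) ∧
      x₀.2 = -∫ t in Ioc (0:ℝ) T, u t ∧
      x₀.1 = ∫ t in Ioc (0:ℝ) T, t * u t ∧
      c = ∫ t in Ioc (0:ℝ) T, |u t|} with hS
  have hne : S.Nonempty := by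
    obtain ⟨T, hT, u, h1, h2, h3, h4, _⟩ := construct x₀.2 x₀.1 1 one_pos
    exact ⟨∫ t in Ioc (0:ℝ) T, |u t|, T, hT, u, h1, h2, h3, h4, rfl⟩
  have hlb : ∀ c ∈ S, |x₀.2| ≤ c := by
    rintro c ⟨T, hT, u, hmeas, hbound, h2, _, hc⟩
    calc |x₀.2| = |∫ t in Ioc (0:ℝ) T, u t| := by rw [h2, abs_neg]
      _ ≤ ∫ t in Ioc (0:ℝ) T, |u t| := by
          simpa [Real.norm_eq_abs] using
            norm_integral_le_integral_norm (μ := volume.restrict (Ioc (0:ℝ) T)) u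
      _ = c := hc.symm
  have hbdd : BddBelow S := ⟨|x₀.2|, hlb⟩
  apply le_antisymm
  · rw [Real.sInf_le_iff hbdd hne]
    intro ε hε
    obtain ⟨T, hT, u, h1, h2, h3, h4, h5⟩ := construct x₀.2 x₀.1 (ε/2) (by linarith)
    exact ⟨∫ t in Ioc (0:ℝ) T, |u t|, ⟨T, hT, u, h1, h2, h3, h4, rfl⟩, by linarith⟩
  · exact le_csInf hne hlb
end

section
/- For the harmonic oscillator with x₀ ∈ ℝ² and k ∈ ℕ with k ≥ |x₀|, the cost c(k) = k · arccos(1 − |x₀|²/(2k²)) of the k-switch optimal trajectory converges to |x₀| as k → ∞. -/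
open Filter

theorem stmt19 (r : ℝ) (hr : 0 ≤ r) :
    Tendsto (fun k : ℕ => (k : ℝ) * Real.arccos (1 - r ^ 2 / (2 * (k : ℝ) ^ 2)))
      atTop (nhds r) := by
  rcases eq_or_lt_of_le hr with h0 | hpos
  · simp [← h0, Real.arccos_one]
  · -- r > 0
    have hd : HasDerivAt Real.arcsin 1 0 := by
      have := Real.hasDerivAt_arcsin (x := 0) (by norm_num) (by norm_num)
      simpa using this
    have hslope : Tendsto (fun x : ℝ => Real.arcsin x / x)
        (nhdsWithin 0 {(0:ℝ)}ᶜ) (nhds 1) := by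
      have h := hasDerivAt_iff_tendsto_slope.mp hd
      refine h.congr' ?_
      filter_upwards [self_mem_nhdsWithin] with x hx
      simp [slope_def_field, Real.arcsin_zero]
    -- u k = r / (2 k)
    have hu : Tendsto (fun k : ℕ => r / (2 * (k : ℝ))) atTop
        (nhdsWithin 0 {(0:ℝ)}ᶜ) := by
      apply tendsto_nhdsWithin_of_tendsto_nhds_of_eventually_within
      · exact Tendsto.div_atTop tendsto_const_nhds
          ((tendsto_natCast_atTop_atTop).const_mul_atTop (by norm_num : (0:ℝ) < 2))
      · filter_upwards [eventually_ge_atTop 1] with k hk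
        have hk' : (0:ℝ) < (k : ℝ) := by exact_mod_cast hk
        have : 0 < r / (2 * (k : ℝ)) := by positivity
        exact fun h => absurd h (ne_of_gt this)
    have hmain : Tendsto (fun k : ℕ =>
        r * (Real.arcsin (r / (2 * (k : ℝ))) / (r / (2 * (k : ℝ))))) atTop
        (nhds r) := by
      have := (hslope.comp hu).const_mul r
      simpa using this
    refine hmain.congr' ?_
    filter_upwards [eventually_ge_atTop 1, eventually_ge_atTop ⌈r⌉₊] with k hk1 hkr
    have hk' : (0:ℝ) < (k : ℝ) := by exact_mod_cast hk1
    have hrk : r ≤ (k : ℝ) := le_trans (Nat.le_ceil r) (by exact_mod_cast hkr)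
    set s : ℝ := r / (2 * (k : ℝ)) with hs
    have hs0 : 0 < s := by positivity
    have hs1 : s ≤ 1 := by
      rw [hs, div_le_one (by positivity)]
      linarith
    have hcos : Real.cos (2 * Real.arcsin s) = 1 - 2 * s ^ 2 := by
      rw [Real.cos_two_mul, Real.cos_arcsin, Real.sq_sqrt (by nlinarith)]
      ring
    have harg : 1 - r ^ 2 / (2 * (k : ℝ) ^ 2) = 1 - 2 * s ^ 2 := by
      rw [hs]
      field_simp
    have harccos : Real.arccos (1 - 2 * s ^ 2) = 2 * Real.arcsin s := by
      rw [← hcos, Real.arccos_cos]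
      · have := Real.arcsin_nonneg.mpr hs0.le
        linarith
      · have h1 : Real.arcsin s ≤ Real.pi / 2 := Real.arcsin_le_pi_div_two s
        linarith
    rw [harg, harccos, hs]
    field_simp
end
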